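/- arXiv:1602.01963 — 6 statements merged into one kernel-verified Lean document; each statement's English description precedes it below -/
import Mathlib

section
/- Let G be a parity game, j ∈ {0,1} a player, and ρ a play in G. Then c(ρ) ∈ Ω_j if and only if there exists a suffix of ρ that begins with an infinite number of consecutive j-dominating sequences. -/
/-- A parity game: an owner (player `0` or `1`) for each state, a total
transition relation `R` and a coloring `c` of the states. -/
structure ParityGame (S : Type) where
  owner : S → Fin 2
  R : S → S → Prop
  total : ∀ s, ∃ t, R s t
  c : S → ℕ

namespace ParityGame

variable {S : Type}

/-- The value `e` occurs infinitely often in the sequence `π`. -/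
def InfOften (π : ℕ → ℕ) (e : ℕ) : Prop := ∀ n, ∃ i, n ≤ i ∧ π i = e

/-- `π ∈ Ω_j` : `π` is bounded and the largest value occurring infinitely often
in `π` is congruent to `j` mod 2. -/
def InOmega (j : Fin 2) (π : ℕ → ℕ) : Prop :=
  (∃ k, ∀ i, π i ≤ k) ∧
  ∃ e, InfOften π e ∧ (∀ e', InfOften π e' → e' ≤ e) ∧ e % 2 = (j : ℕ)

/-- `π ∈ Λ_j` : `π ∈ Ω_j` and the largest non-initial entry of `π` is congruent
to `j` mod 2. -/
def InLambda (j : Fin 2) (π : ℕ → ℕ) : Prop :=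
  InOmega j π ∧ ∃ i, 1 ≤ i ∧ (∀ k, 1 ≤ k → π k ≤ π i) ∧ π i % 2 = (j : ℕ)

variable (G : ParityGame S)

/-- A play: an infinite sequence of states respecting the transition relation. -/
def IsPlay (ρ : ℕ → S) : Prop := ∀ i, G.R (ρ i) (ρ (i + 1))

/-- A strategy is modelled as a function from (past history, current state) to a
successor of the current state. -/
def IsStrategy (σ : List S → S → S) : Prop := ∀ h s, G.R s (σ h s)

/-- A play is compatible with a strategy `σ` of player `j` if at every state owned
by `j` the play follows `σ` (applied to the history so far). -/
def Compatible (j : Fin 2) (σ : List S → S → S) (ρ : ℕ → S) : Prop :=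
  ∀ i, G.owner (ρ i) = j → ρ (i + 1) = σ (List.ofFn fun k : Fin i => ρ k.val) (ρ i)

/-- A strategy is memoryless if it only depends on the current state. -/
def Memoryless (σ : List S → S → S) : Prop := ∀ h h' s, σ h s = σ h' s

/-- The color sequence of a play. -/
def colorSeq (ρ : ℕ → S) : ℕ → ℕ := fun i => G.c (ρ i)

/-- The segment `ρ_a ρ_{a+1} ... ρ_b` is `j`-dominating: it has at least one
transition and the largest color among its non-initial states is ≡ j (mod 2). -/
def SegDom (j : Fin 2) (ρ : ℕ → S) (a b : ℕ) : Prop :=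
  a < b ∧ ((Finset.Icc (a + 1) b).sup fun k => G.c (ρ k)) % 2 = (j : ℕ)

/-- The play `ρ` begins with an infinite number of consecutive `j`-dominating
sequences. -/
def BeginsInfDom (j : Fin 2) (ρ : ℕ → S) : Prop :=
  ∃ idx : ℕ → ℕ, idx 0 = 0 ∧ ∀ ℓ, G.SegDom j ρ (idx ℓ) (idx (ℓ + 1))

/-- The play `ρ` begins with (at least) `k` consecutive `j`-dominating sequences. -/
def BeginsKDom (j : Fin 2) (ρ : ℕ → S) (k : ℕ) : Prop :=
  ∃ idx : ℕ → ℕ, idx 0 = 0 ∧ ∀ ℓ < k, G.SegDom j ρ (idx ℓ) (idx (ℓ + 1))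

/-- The (infinite) play `ρ` is itself `j`-dominating : the largest color among
its non-initial states is ≡ j (mod 2). -/
def PlayDom (j : Fin 2) (ρ : ℕ → S) : Prop :=
  ∃ i, 1 ≤ i ∧ (∀ k, 1 ≤ k → G.c (ρ k) ≤ G.c (ρ i)) ∧ G.c (ρ i) % 2 = (j : ℕ)

/-- The winning region `W_j(G)` of player `j`. -/
def WinRegion (j : Fin 2) : Set S :=
  {s | ∃ σ, G.IsStrategy σ ∧ ∀ ρ, G.IsPlay ρ → ρ 0 = s → G.Compatible j σ ρ →
    InOmega j (G.colorSeq ρ)}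

/-- The winning core `A_j(G)` of player `j`. -/
def WinCore (j : Fin 2) : Set S :=
  {s | ∃ σ, G.IsStrategy σ ∧ ∀ ρ, G.IsPlay ρ → ρ 0 = s → G.Compatible j σ ρ →
    G.BeginsInfDom j ρ}

/-- `A^k_j(G)` : states from which player `j` can ensure that the play begins
with at least `k` consecutive `j`-dominating sequences. -/
def WinCoreK (j : Fin 2) (k : ℕ) : Set S :=
  {s | ∃ σ, G.IsStrategy σ ∧ ∀ ρ, G.IsPlay ρ → ρ 0 = s → G.Compatible j σ ρ →
    G.BeginsKDom j ρ k}

/-- The restricted parity game `G ↾ T` (given that the restricted transition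
relation is total). -/
def restrict (T : Set S) (h : ∀ s : T, ∃ t : T, G.R s.1 t.1) : ParityGame T where
  owner s := G.owner s.1
  R a b := G.R a.1 b.1
  total := h
  c s := G.c s.1

end ParityGame

/-- Membership in the attractor `Attr_j(G, T)` : the least set containing `T`,
closed under adding states from which player `j` controls reaching it. -/
inductive ParityGame.AttrRel {S : Type} (G : ParityGame S) (j : Fin 2) (T : Set S) : S → Prop
  | base {s} : s ∈ T → AttrRel G j T s
  | own {s t} : G.owner s = j → G.R s t → AttrRel G j T t → AttrRel G j T s
  | opp {s} : G.owner s ≠ j → (∀ t, G.R s t → AttrRel G j T t) → AttrRel G j T s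

namespace ParityGame

variable {S : Type} (G : ParityGame S)

/-- The attractor `Attr_j(G, T)` as a set. -/
def attractor (j : Fin 2) (T : Set S) : Set S := {s | AttrRel G j T s}

/-- The positive attractor `Attr⁺_j(G, T)`. -/
def posAttractor (j : Fin 2) (T : Set S) : Set S :=
  G.attractor j ({s | G.owner s = j ∧ ∃ t ∈ T, G.R s t} ∪
                 {s | G.owner s ≠ j ∧ ∀ t, G.R s t → t ∈ T})

/-- The product game `G†_j` over states `S × {0, ..., d}`. -/
def prodGame (j : Fin 2) (d : ℕ) (hc : ∀ s, G.c s ≤ d) :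
    ParityGame (S × Fin (d + 1)) where
  owner p := G.owner p.1
  R p q := G.R p.1 q.1 ∧ (q.2 : ℕ) = max (p.2 : ℕ) (G.c q.1)
  total p := by
    obtain ⟨t, ht⟩ := G.total p.1
    refine ⟨(t, ⟨max (p.2 : ℕ) (G.c t), ?_⟩), ht, rfl⟩
    exact Nat.lt_succ_iff.mpr (max_le (Nat.lt_succ_iff.mp p.2.isLt) (hc t))
  c p := if (p.2 : ℕ) % 2 = (j : ℕ) then G.c p.1 else (p.2 : ℕ)

/-- `X` is a fatal attractor for player `j`: all states in `X` have the same
color `e ≡ j (mod 2)` and from every state of `X` player `j` can force the play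
back to `X` without passing a color greater than `e`. -/
def FatalAttractor (j : Fin 2) (X : Set S) : Prop :=
  ∃ e, e % 2 = (j : ℕ) ∧ (∀ s ∈ X, G.c s = e) ∧
    ∀ s ∈ X, ∃ σ, G.IsStrategy σ ∧ ∀ ρ, G.IsPlay ρ → ρ 0 = s → G.Compatible j σ ρ →
      ∃ k, 0 < k ∧ ρ k ∈ X ∧ ∀ i, 0 < i → i ≤ k → G.c (ρ i) ≤ e

/-- `T` is `j`-closed: player `j` can force the play to stay in `T`. -/
def JClosed (j : Fin 2) (T : Set S) : Prop :=
  (∀ s ∈ T, G.owner s ≠ j → ∀ t, G.R s t → t ∈ T) ∧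
  (∀ s ∈ T, G.owner s = j → ∃ t ∈ T, G.R s t)

/-- The restriction of `G` to a `j`-closed set has a total transition relation. -/
theorem JClosed.totalOn {G : ParityGame S} {j : Fin 2} {T : Set S}
    (h : G.JClosed j T) : ∀ s : T, ∃ t : T, G.R s.1 t.1 := by
  rintro ⟨s, hs⟩
  by_cases hj : G.owner s = j
  · obtain ⟨t, ht, hrt⟩ := h.2 s hs hj
    exact ⟨⟨t, ht⟩, hrt⟩
  · obtain ⟨t, hrt⟩ := G.total s
    exact ⟨⟨t, h.1 s hs hj t hrt⟩, hrt⟩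

end ParityGame

namespace ParityGame

/-- The sequence `B^i_j(G)` of under-approximations of the winning core. -/
def Bset {S : Type} (G : ParityGame S) (j : Fin 2) : ℕ → Set S
  | 0 => Set.univ
  | i + 1 =>
    {s | s ∈ Bset G j i ∧ ∃ σ, G.IsStrategy σ ∧ ∀ ρ, G.IsPlay ρ → ρ 0 = s →
      G.Compatible j σ ρ → ∃ k, G.SegDom j ρ 0 k ∧ ρ k ∈ Bset G j i}

open Classical in
/-- Rank of a color sequence according to the order
`Λ₁ ◁ Ω₁ \ Λ₁ ◁ Ω₀ \ Λ₀ ◁ Λ₀`; the preference relation `≤₀` of player 0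
compares these ranks. -/
noncomputable def prefRank (π : ℕ → ℕ) : ℕ :=
  if InLambda 0 π then 3
  else if InOmega 0 π then 2
  else if InLambda 1 π then 0
  else 1

/-- The reward order `≺_j` on colors. -/
def RewardLt (j : Fin 2) (v u : ℕ) : Prop :=
  (v < u ∧ u % 2 = (j : ℕ)) ∨ (u < v ∧ v % 2 = ((1 - j : Fin 2) : ℕ))

end ParityGame

open ParityGame

private lemma pg_exists_infOften (π : ℕ → ℕ) (k : ℕ) (hb : ∀ i, π i ≤ k) :
    ∃ e, InfOften π e := by
  by_contra h
  push_neg at h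
  have h' : ∀ e, ∃ n, ∀ i, n ≤ i → π i ≠ e := by
    intro e
    have he := h e
    unfold InfOften at he
    push_neg at he
    exact he
  choose f hf using h'
  have h1 : f (π ((Finset.range (k+1)).sup f)) ≤ (Finset.range (k+1)).sup f :=
    Finset.le_sup (by simp [Nat.lt_succ_iff, hb])
  exact hf _ _ h1 rfl

private lemma pg_eventually_le (π : ℕ → ℕ) (k e : ℕ) (hb : ∀ i, π i ≤ k)
    (hmax : ∀ e', InfOften π e' → e' ≤ e) :
    ∃ N, ∀ m, N ≤ m → π m ≤ e := by
  have key : ∀ e', ∃ n, e' ≤ e ∨ ∀ i, n ≤ i → π i ≠ e' := by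
    intro e'
    by_cases hle : e' ≤ e
    · exact ⟨0, Or.inl hle⟩
    · have hni : ¬ InfOften π e' := fun hi => hle (hmax e' hi)
      unfold InfOften at hni; push_neg at hni
      obtain ⟨n, hn⟩ := hni
      exact ⟨n, Or.inr hn⟩
  choose f hf using key
  refine ⟨(Finset.range (k+1)).sup f, fun m hm => ?_⟩
  by_contra hgt
  push_neg at hgt
  rcases hf (π m) with h | h
  · omega
  · exact h m (le_trans (Finset.le_sup (by simp [Nat.lt_succ_iff, hb])) hm) rfl

/-- A play `ρ` is winning for player `j` (`c(ρ) ∈ Ω_j`) iff some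
suffix of `ρ` begins with an infinite number of consecutive `j`-dominating
sequences. -/
theorem omega_iff_suffix_beginsInfDom {S : Type} [Fintype S] (G : ParityGame S) (j : Fin 2)
    (ρ : ℕ → S) (hρ : G.IsPlay ρ) :
    InOmega j (G.colorSeq ρ) ↔ ∃ i, G.BeginsInfDom j (fun k => ρ (i + k)) := by
  classical
  constructor
  · rintro ⟨⟨k, hk⟩, e, hinf, hmax, hmod⟩
    obtain ⟨N, hN⟩ := pg_eventually_le _ k e hk hmax
    simp only [colorSeq] at hk hN hinf
    have hnext : ∀ a : ℕ, ∃ b, a < b ∧ G.c (ρ (N + b)) = e := by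
      intro a
      obtain ⟨p, hp1, hp2⟩ := hinf (N + a + 1)
      refine ⟨p - N, by omega, ?_⟩
      rw [show N + (p - N) = p by omega]
      exact hp2
    choose next h1 h2 using hnext
    refine ⟨N, fun ℓ => next^[ℓ] 0, rfl, fun ℓ => ?_⟩
    show G.SegDom j (fun k => ρ (N + k)) (next^[ℓ] 0) (next^[ℓ+1] 0)
    set a := next^[ℓ] 0 with ha
    rw [Function.iterate_succ_apply' next ℓ 0]
    refine ⟨h1 a, ?_⟩
    have hsup : ((Finset.Icc (a+1) (next a)).sup fun m => G.c (ρ (N + m))) = e := by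
      apply le_antisymm
      · exact Finset.sup_le fun m _ => hN (N + m) (by omega)
      · have hmem : next a ∈ Finset.Icc (a+1) (next a) :=
          Finset.mem_Icc.mpr ⟨h1 a, le_refl _⟩
        have := Finset.le_sup (f := fun m => G.c (ρ (N + m))) hmem
        rw [← h2 a]
        exact this
    rw [hsup]
    exact hmod
  · rintro ⟨i, idx, hidx0, hseg⟩
    have hk : ∀ m, G.colorSeq ρ m ≤ Finset.univ.sup G.c := fun m =>
      Finset.le_sup (f := G.c) (Finset.mem_univ (ρ m))
    set k := Finset.univ.sup G.c with hkdef
    obtain ⟨e0, he0⟩ := pg_exists_infOften (G.colorSeq ρ) k hk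
    set E := (Finset.range (k+1)).filter (fun e => InfOften (G.colorSeq ρ) e) with hE
    have hmemE : ∀ e', InfOften (G.colorSeq ρ) e' → e' ∈ E := by
      intro e' he'
      obtain ⟨p, _, hp⟩ := he' 0
      exact Finset.mem_filter.mpr ⟨Finset.mem_range.mpr (by have := hk p; omega), he'⟩
    have hEne : E.Nonempty := ⟨e0, hmemE e0 he0⟩
    set e := E.max' hEne with hedef
    have hein : InfOften (G.colorSeq ρ) e := (Finset.mem_filter.mp (E.max'_mem hEne)).2
    have hmax : ∀ e', InfOften (G.colorSeq ρ) e' → e' ≤ e := fun e' he' =>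
      E.le_max' e' (hmemE e' he')
    refine ⟨⟨k, hk⟩, e, hein, hmax, ?_⟩
    obtain ⟨N, hN⟩ := pg_eventually_le _ k e hk hmax
    have hlt : ∀ ℓ, idx ℓ < idx (ℓ+1) := fun ℓ => (hseg ℓ).1
    have hmono : StrictMono idx := strictMono_nat_of_lt_succ hlt
    have hge : ∀ ℓ, ℓ ≤ idx ℓ := by
      intro ℓ
      induction ℓ with
      | zero => omega
      | succ n ih => have := hlt n; omega
    obtain ⟨p, hp1, hp2⟩ := hein (i + idx N + 1)
    set q := p - i with hq
    have hqgt : idx N < q := by omega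
    have hex : ∃ m, q ≤ idx m := ⟨q, hge q⟩
    set M := Nat.find hex with hM
    have hMspec : q ≤ idx M := Nat.find_spec hex
    have hM0 : M ≠ 0 := by
      intro h0
      rw [h0, hidx0] at hMspec
      omega
    set ℓ := M - 1 with hℓ
    have hMℓ : M = ℓ + 1 := by omega
    have hℓlt : idx ℓ < q := by
      by_contra hc
      push_neg at hc
      have := Nat.find_min hex (show ℓ < M by omega)
      exact this hc
    have hqle : q ≤ idx (ℓ+1) := hMℓ ▸ hMspec
    have hℓN : N ≤ ℓ := by
      by_contra hc
      push_neg at hc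
      have : idx (ℓ+1) ≤ idx N := hmono.le_iff_le.mpr (by omega)
      omega
    have hidxN : N ≤ idx ℓ := le_trans (hge N) (le_trans (hmono.le_iff_le.mpr hℓN) (le_refl _))
    have hsegℓ := (hseg ℓ).2
    have hsup : ((Finset.Icc (idx ℓ + 1) (idx (ℓ+1))).sup
        fun m => G.c ((fun k => ρ (i + k)) m)) = e := by
      apply le_antisymm
      · refine Finset.sup_le fun m hm => ?_
        have hm' := Finset.mem_Icc.mp hm
        exact hN (i + m) (by omega)
      · have hmem : q ∈ Finset.Icc (idx ℓ + 1) (idx (ℓ+1)) :=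
          Finset.mem_Icc.mpr ⟨by omega, hqle⟩
        have hle := Finset.le_sup (f := fun m => G.c ((fun k => ρ (i + k)) m)) hmem
        have : G.c ((fun k => ρ (i + k)) q) = e := by
          show G.c (ρ (i + q)) = e
          rw [show i + q = p by omega]
          exact hp2
        rw [← this]
        exact hle
    rw [← hsup]
    exact hsegℓ
end

section
/- Let G be a parity game, j ∈ {0,1} a player, and ρ a play in G. Then ρ begins with an infinite number of consecutive j-dominating sequences if and only if ρ is j-dominating and c(ρ) ∈ Ω_j. -/
open ParityGame

private lemma infOften_of_infinite {f : ℕ → ℕ} {v : ℕ} (h : {i | f i = v}.Infinite) :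
    InfOften f v := by
  intro n
  obtain ⟨b, hb, hnb⟩ := h.exists_gt n
  exact ⟨b, hnb.le, hb⟩

private lemma finite_of_not_infOften {f : ℕ → ℕ} {v : ℕ} (h : ¬ InfOften f v) :
    {i | f i = v}.Finite := by
  simp only [InfOften, not_forall, not_exists, not_and] at h
  obtain ⟨n, hn⟩ := h
  refine Set.Finite.subset (Set.finite_Iio n) ?_
  intro i hi
  by_contra hlt
  exact hn i (not_lt.mp hlt) hi

private lemma exists_max_infOften (f : ℕ → ℕ) (B : ℕ) (hB : ∀ i, f i ≤ B) :
    ∃ e, InfOften f e ∧ ∀ e', InfOften f e' → e' ≤ e := by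
  have hbdd : BddAbove {v | InfOften f v} := by
    refine ⟨B, fun v hv => ?_⟩
    obtain ⟨i, _, hiv⟩ := hv 0
    exact hiv ▸ hB i
  have hne : {v | InfOften f v}.Nonempty := by
    obtain ⟨y, hy⟩ := Finite.exists_infinite_fiber
      (fun i => (⟨f i, Nat.lt_succ_of_le (hB i)⟩ : Fin (B + 1)))
    refine ⟨(y : ℕ), infOften_of_infinite ?_⟩
    refine (Set.infinite_coe_iff.mp hy).mono ?_
    intro i hi
    simpa [Fin.ext_iff] using hi
  exact ⟨sSup _, Nat.sSup_mem hne hbdd, fun e' he' => le_csSup hbdd he'⟩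

private lemma eventually_le_of_max {f : ℕ → ℕ} {B e : ℕ} (hB : ∀ i, f i ≤ B)
    (hmax : ∀ e', InfOften f e' → e' ≤ e) : ∃ N, ∀ i, N ≤ i → f i ≤ e := by
  have hfin : {i | e < f i}.Finite := by
    have hsub : {i | e < f i} ⊆ ⋃ v ∈ Finset.Ioc e B, {i | f i = v} := by
      intro i hi
      exact Set.mem_biUnion (Finset.mem_Ioc.mpr ⟨hi, hB i⟩) rfl
    refine Set.Finite.subset (Set.Finite.biUnion (Finset.Ioc e B).finite_toSet ?_) hsub
    intro v hv
    refine finite_of_not_infOften fun hio => ?_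
    have := hmax v hio
    have := (Finset.mem_Ioc.mp hv).1
    omega
  obtain ⟨N, hN⟩ := hfin.bddAbove
  refine ⟨N + 1, fun i hi => ?_⟩
  by_contra hlt
  have := hN (not_le.mp hlt)
  omega

/-- A play `ρ` begins with an infinite number of consecutive
`j`-dominating sequences iff `ρ` is itself `j`-dominating and `c(ρ) ∈ Ω_j`. -/
theorem beginsInfDom_iff_playDom_and_omega {S : Type} [Fintype S] (G : ParityGame S)
    (j : Fin 2) (ρ : ℕ → S) (hρ : G.IsPlay ρ) :
    G.BeginsInfDom j ρ ↔ (G.PlayDom j ρ ∧ InOmega j (G.colorSeq ρ)) := by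
  classical
  set B := Finset.univ.sup G.c with hBdef
  have hB : ∀ i, G.colorSeq ρ i ≤ B := fun i =>
    Finset.le_sup (f := G.c) (Finset.mem_univ (ρ i))
  constructor
  · rintro ⟨idx, h0, hseg⟩
    have hmono : StrictMono idx := strictMono_nat_of_lt_succ fun ℓ => (hseg ℓ).1
    have hle : ∀ ℓ, ℓ ≤ idx ℓ := fun ℓ => hmono.le_apply
    -- every k ≥ 1 lies in some segment
    have hfind : ∀ k, 1 ≤ k → ∃ m, idx m < k ∧ k ≤ idx (m + 1) := by
      intro k hk
      have hP : ∃ L, k ≤ idx L := ⟨k, hle k⟩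
      have hkL : k ≤ idx (Nat.find hP) := Nat.find_spec hP
      have hLpos : Nat.find hP ≠ 0 := by
        intro h
        rw [h, h0] at hkL; omega
      obtain ⟨m, hm⟩ := Nat.exists_eq_succ_of_ne_zero hLpos
      rw [hm] at hkL
      refine ⟨m, ?_, hkL⟩
      have := Nat.find_min hP (m := m) (by omega)
      omega
    -- global max of non-initial colors
    have hVbdd : BddAbove {n | ∃ k, 1 ≤ k ∧ G.colorSeq ρ k = n} := by
      refine ⟨B, ?_⟩
      rintro n ⟨k, _, rfl⟩
      exact hB k
    have hVne : {n | ∃ k, 1 ≤ k ∧ G.colorSeq ρ k = n}.Nonempty :=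
      ⟨_, 1, le_refl 1, rfl⟩
    obtain ⟨i₀, hi₀1, hi₀v⟩ := Nat.sSup_mem hVne hVbdd
    set M := sSup {n | ∃ k, 1 ≤ k ∧ G.colorSeq ρ k = n} with hMdef
    have hMmax : ∀ k, 1 ≤ k → G.colorSeq ρ k ≤ M := fun k hk =>
      le_csSup hVbdd ⟨k, hk, rfl⟩
    have hMpar : M % 2 = (j : ℕ) := by
      obtain ⟨m, hm1, hm2⟩ := hfind i₀ hi₀1
      have hsup : ((Finset.Icc (idx m + 1) (idx (m + 1))).sup fun k => G.c (ρ k)) = M := by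
        refine le_antisymm (Finset.sup_le fun k hk => ?_) ?_
        · have := (Finset.mem_Icc.mp hk).1
          exact hMmax k (by omega)
        · have hi₀mem : i₀ ∈ Finset.Icc (idx m + 1) (idx (m + 1)) :=
            Finset.mem_Icc.mpr ⟨by omega, hm2⟩
          calc M = G.c (ρ i₀) := hi₀v.symm
            _ ≤ _ := Finset.le_sup (f := fun k => G.c (ρ k)) hi₀mem
      have := (hseg m).2
      rwa [hsup] at this
    -- max inf-often color
    obtain ⟨e, he, hemax⟩ := exists_max_infOften (G.colorSeq ρ) B hB
    obtain ⟨N, hN⟩ := eventually_le_of_max hB hemax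
    have hepar : e % 2 = (j : ℕ) := by
      obtain ⟨k, hk, hkv⟩ := he (idx N + 1)
      obtain ⟨m, hm1, hm2⟩ := hfind k (by omega)
      have hNm : N ≤ m := by
        have : idx N < idx (m + 1) := by omega
        have := hmono.lt_iff_lt.mp this
        omega
      have hNidx : N ≤ idx m := le_trans (hle N) (hmono.le_iff_le.mpr hNm)
      have hsup : ((Finset.Icc (idx m + 1) (idx (m + 1))).sup fun k => G.c (ρ k)) = e := by
        refine le_antisymm (Finset.sup_le fun k' hk' => ?_) ?_
        · have := (Finset.mem_Icc.mp hk').1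
          exact hN k' (by omega)
        · have hkmem : k ∈ Finset.Icc (idx m + 1) (idx (m + 1)) :=
            Finset.mem_Icc.mpr ⟨by omega, hm2⟩
          calc e = G.c (ρ k) := hkv.symm
            _ ≤ _ := Finset.le_sup (f := fun k => G.c (ρ k)) hkmem
      have := (hseg m).2
      rwa [hsup] at this
    refine ⟨⟨i₀, hi₀1, fun k hk => ?_, ?_⟩, ⟨B, hB⟩, e, he, hemax, hepar⟩
    · exact le_of_le_of_eq (hMmax k hk) hi₀v.symm
    · rw [show G.c (ρ i₀) = M from hi₀v]; exact hMpar
  · rintro ⟨⟨i₀, hi₀1, hi₀max, hi₀par⟩, _, e, he, hemax, hepar⟩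
    obtain ⟨N, hN⟩ := eventually_le_of_max hB hemax
    set N' := max N i₀ with hN'def
    have hnext : ∀ n, ∃ i, n < i ∧ N' ≤ i ∧ G.colorSeq ρ i = e := by
      intro n
      obtain ⟨i, hi, hiv⟩ := he (max (n + 1) N')
      have h1 := le_max_left (n + 1) N'
      have h2 := le_max_right (n + 1) N'
      exact ⟨i, by omega, by omega, hiv⟩
    choose next hnext1 hnext2 hnext3 using hnext
    have hN'1 : N ≤ N' := le_max_left N i₀
    have hN'2 : i₀ ≤ N' := le_max_right N i₀
    have key0 : G.SegDom j ρ 0 (next 0) := by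
      have hb : N' ≤ next 0 := hnext2 0
      refine ⟨by omega, ?_⟩
      have hsup : ((Finset.Icc (0 + 1) (next 0)).sup fun k => G.c (ρ k)) = G.c (ρ i₀) := by
        refine le_antisymm (Finset.sup_le fun k hk => ?_) ?_
        · have := (Finset.mem_Icc.mp hk).1
          exact hi₀max k (by omega)
        · exact Finset.le_sup (f := fun k => G.c (ρ k))
            (Finset.mem_Icc.mpr ⟨by omega, by omega⟩)
      rw [hsup]; exact hi₀par
    have key : ∀ n, G.SegDom j ρ (next n) (next (next n)) := by
      intro n
      have h1 : N' ≤ next n := hnext2 n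
      have h2 : next n < next (next n) := hnext1 (next n)
      refine ⟨h2, ?_⟩
      have hsup : ((Finset.Icc (next n + 1) (next (next n))).sup fun k => G.c (ρ k)) = e := by
        refine le_antisymm (Finset.sup_le fun k hk => ?_) ?_
        · have := (Finset.mem_Icc.mp hk).1
          exact hN k (by omega)
        · calc e = G.c (ρ (next (next n))) := (hnext3 (next n)).symm
            _ ≤ _ := Finset.le_sup (f := fun k => G.c (ρ k))
              (Finset.mem_Icc.mpr ⟨by omega, le_refl _⟩)
      rw [hsup]; exact hepar
    refine ⟨fun ℓ => Nat.rec 0 (fun _ p => next p) ℓ, rfl, fun ℓ => ?_⟩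
    cases ℓ with
    | zero => exact key0
    | succ m => exact key (Nat.rec 0 (fun _ p => next p) m)
end

section
/- Let G be a parity game and j ∈ {0,1} a player. Then the winning core of player j is contained in the winning region of player j: A_j(G) ⊆ W_j(G). -/
open ParityGame

lemma beginsInfDom_inOmega {S : Type} [Fintype S] (G : ParityGame S) (j : Fin 2)
    (ρ : ℕ → S) (h : G.BeginsInfDom j ρ) : InOmega j (G.colorSeq ρ) := by
  classical
  set π : ℕ → ℕ := G.colorSeq ρ with hπ
  obtain ⟨idx, hidx0, hseg⟩ := h
  have hmono : ∀ ℓ, idx ℓ < idx (ℓ + 1) := fun ℓ => (hseg ℓ).1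
  have hsm : StrictMono idx := strictMono_nat_of_lt_succ hmono
  have hge : ∀ ℓ, ℓ ≤ idx ℓ := fun ℓ => by
    induction ℓ with
    | zero => exact Nat.zero_le _
    | succ n ih => exact Nat.succ_le_of_lt (lt_of_le_of_lt ih (hmono n))
  set B := Finset.univ.sup G.c with hB
  have hbB : ∀ i, π i ≤ B := fun i => Finset.le_sup (f := G.c) (Finset.mem_univ (ρ i))
  -- some value occurs infinitely often
  obtain ⟨v0, hv0⟩ := Finite.exists_infinite_fiber
    (fun i => (⟨π i, Nat.lt_succ_of_le (hbB i)⟩ : Fin (B + 1)))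
  have hinf_of_fiber : ∀ v : ℕ, (setOf fun i => π i = v).Infinite → InfOften π v := by
    intro v hv n
    obtain ⟨b, hb, hnb⟩ := hv.exists_gt n
    exact ⟨b, le_of_lt hnb, hb⟩
  have hv0' : InfOften π (v0 : ℕ) := by
    apply hinf_of_fiber
    apply Set.Infinite.mono ?_ (Set.infinite_coe_iff.mp hv0)
    intro i hi
    have h2 : (⟨π i, Nat.lt_succ_of_le (hbB i)⟩ : Fin (B + 1)) = v0 := hi
    exact congrArg Fin.val h2
  set e := Nat.findGreatest (InfOften π) B with he_def
  have hbound : ∀ v, InfOften π v → v ≤ B := by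
    intro v hv
    obtain ⟨i, _, hi⟩ := hv 0
    exact hi ▸ hbB i
  have he : InfOften π e := Nat.findGreatest_spec (hbound _ hv0') hv0'
  have hmax : ∀ v, InfOften π v → v ≤ e := fun v hv =>
    Nat.le_findGreatest (hbound v hv) hv
  -- beyond some N, all colors are ≤ e
  have hfin : (setOf fun i => e < π i).Finite := by
    have hsub : (setOf fun i => e < π i) ⊆
        ⋃ v ∈ Finset.Ioc e B, (setOf fun i => π i = v) := by
      intro i hi
      exact Set.mem_biUnion (Finset.mem_Ioc.mpr ⟨hi, hbB i⟩) rfl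
    refine Set.Finite.subset (Set.Finite.biUnion (Finset.Ioc e B).finite_toSet ?_) hsub
    intro v hv
    by_contra hinf
    have := hmax v (hinf_of_fiber v hinf)
    exact absurd this (not_le.mpr (Finset.mem_Ioc.mp hv).1)
  obtain ⟨N, hN⟩ := hfin.bddAbove
  have hNle : ∀ i, N < i → π i ≤ e := by
    intro i hi
    by_contra hc
    exact absurd (hN (not_le.mp hc)) (not_le.mpr hi)
  -- find a j-dominating segment entirely beyond N containing a position of color e
  obtain ⟨i, hiN, hie⟩ := he (idx (N + 1) + 1)
  have hP0 : idx 0 < i := by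
    have := hge (N + 1); omega
  set L := Nat.findGreatest (fun m => idx m < i) i with hL
  have hLi : idx L < i :=
    Nat.findGreatest_spec (P := fun m => idx m < i) (n := i) (Nat.zero_le i) hP0
  have hLnext : i ≤ idx (L + 1) := by
    by_contra hc
    push_neg at hc
    have h0 : L + 1 ≤ i := by have := hge (L + 1); omega
    have h2 : L + 1 ≤ L := Nat.le_findGreatest (P := fun m => idx m < i) h0 hc
    omega
  have hLN : N + 1 ≤ L := by
    have hPN : idx (N + 1) < i := by omega
    exact Nat.le_findGreatest (P := fun m => idx m < i) (by have := hge (N + 1); omega) hPN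
  have hkN : ∀ k, idx L + 1 ≤ k → N < k := by
    intro k hk
    have := hsm.monotone hLN
    have := hge (N + 1)
    omega
  have hMe : ((Finset.Icc (idx L + 1) (idx (L + 1))).sup fun k => G.c (ρ k)) = e := by
    apply le_antisymm
    · apply Finset.sup_le
      intro k hk
      exact hNle k (hkN k (Finset.mem_Icc.mp hk).1)
    · calc e = π i := hie.symm
        _ ≤ _ := Finset.le_sup (Finset.mem_Icc.mpr ⟨by omega, hLnext⟩)
  refine ⟨⟨B, hbB⟩, e, he, hmax, ?_⟩
  rw [← hMe]
  exact (hseg L).2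

/-- The winning core of player `j` is contained in the winning
region of player `j`: `A_j(G) ⊆ W_j(G)`. -/
theorem winCore_subset_winRegion {S : Type} [Fintype S] (G : ParityGame S) (j : Fin 2) :
    G.WinCore j ⊆ G.WinRegion j := by
  intro s hs
  obtain ⟨σ, hσ, hwin⟩ := hs
  exact ⟨σ, hσ, fun ρ hρ h0 hc => beginsInfDom_inOmega G j ρ (hwin ρ hρ h0 hc)⟩
end

section
/- Let G be a parity game and j ∈ {0,1} a player. If the winning core A_j(G) of player j is empty, then the winning region W_j(G) of player j is empty. -/
open ParityGame

namespace PGW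

open ParityGame Classical

variable {S : Type}

/-! ### sequence lemmas -/

theorem infOften_shift {π : ℕ → ℕ} {e : ℕ} (n : ℕ) (h : InfOften π e) :
    InfOften (fun i => π (n + i)) e := by
  intro m
  obtain ⟨i, hi, he⟩ := h (n + m)
  refine ⟨i - n, by omega, ?_⟩
  show π (n + (i - n)) = e
  have hn : n + (i - n) = i := by omega
  rw [hn]; exact he

theorem infOften_of_shift {π : ℕ → ℕ} {e : ℕ} (n : ℕ)
    (h : InfOften (fun i => π (n + i)) e) : InfOften π e := by
  intro m
  obtain ⟨i, hi, he⟩ := h m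
  exact ⟨n + i, by omega, he⟩

theorem inOmega_shift {j : Fin 2} {π : ℕ → ℕ} (n : ℕ) (h : InOmega j π) :
    InOmega j (fun i => π (n + i)) := by
  obtain ⟨⟨k, hk⟩, e, he, hmax, hpar⟩ := h
  exact ⟨⟨k, fun i => hk _⟩, e, infOften_shift n he,
    fun e' h' => hmax e' (infOften_of_shift n h'), hpar⟩

/-- From `InOmega` extract the max color `m` occurring infinitely often together
with a threshold `N` beyond which all colors are `≤ m`. -/
theorem inOmega_extract {j : Fin 2} {π : ℕ → ℕ} (h : InOmega j π) :
    ∃ m N, m % 2 = (j : ℕ) ∧ InfOften π m ∧ ∀ i, N ≤ i → π i ≤ m := by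
  obtain ⟨⟨K, hK⟩, e, he, hmax, hpar⟩ := h
  have hfin : ∀ v, ¬ InfOften π v → ∃ n, ∀ i, n ≤ i → π i ≠ v := by
    intro v hv
    by_contra hc
    push_neg at hc
    exact hv fun n => by obtain ⟨i, hi, hv'⟩ := hc n; exact ⟨i, hi, hv'⟩
  classical
  -- for every value v ≤ K with v > e, it occurs finitely often
  have hchoice : ∀ v : ℕ, ∃ n, v ≤ K → e < v → ∀ i, n ≤ i → π i ≠ v := by
    intro v
    by_cases hv : v ≤ K ∧ e < v
    · have : ¬ InfOften π v := fun hIO => absurd (hmax v hIO) (by omega)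
      obtain ⟨n, hn⟩ := hfin v this
      exact ⟨n, fun _ _ => hn⟩
    · exact ⟨0, fun h1 h2 => absurd ⟨h1, h2⟩ hv⟩
  choose f hf using hchoice
  refine ⟨e, (Finset.range (K + 1)).sup f, hpar, he, ?_⟩
  intro i hi
  by_contra hlt
  push_neg at hlt
  have hv : π i ≤ K := hK i
  have : (Finset.range (K + 1)).sup f ≤ i := hi
  have hmem : π i ∈ Finset.range (K + 1) := Finset.mem_range.mpr (by omega)
  exact hf (π i) hv hlt i (le_trans (Finset.le_sup hmem) hi) rfl

theorem not_inOmega_of_maxinf {j : Fin 2} {π : ℕ → ℕ} {d : ℕ}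
    (hb : ∀ i, π i ≤ d) (hd : InfOften π d) (hpar : d % 2 ≠ (j : ℕ)) :
    ¬ InOmega j π := by
  rintro ⟨-, e, he, hmax, hpar'⟩
  have h1 : d ≤ e := hmax d hd
  obtain ⟨i, -, hi⟩ := he 0
  have h2 : e ≤ d := hi ▸ hb i
  have hed : e = d := le_antisymm h2 h1
  exact hpar (hed ▸ hpar')

theorem not_inOmega_shift {j : Fin 2} {π : ℕ → ℕ} (n : ℕ)
    (h : ¬ InOmega j (fun i => π (n + i))) : ¬ InOmega j π :=
  fun h' => h (inOmega_shift n h')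

/-! ### histories and built plays -/

def Hist (ρ : ℕ → S) (i : ℕ) : List S := List.ofFn fun k : Fin i => ρ k.val

theorem hist_succ (ρ : ℕ → S) (i : ℕ) : Hist ρ (i + 1) = Hist ρ i ++ [ρ i] := by
  rw [Hist, List.ofFn_succ']
  simp [Hist, List.concat_eq_append]

theorem hist_add (ρ : ℕ → S) (a b : ℕ) :
    Hist ρ (a + b) = Hist ρ a ++ Hist (fun i => ρ (a + i)) b := by
  induction b with
  | zero => simp [Hist]
  | succ b ih => rw [show a + (b+1) = (a+b)+1 by omega, hist_succ, ih, hist_succ,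
      List.append_assoc]

theorem compatible_iff_hist {G : ParityGame S} {j : Fin 2} {σ : List S → S → S} {ρ : ℕ → S} :
    G.Compatible j σ ρ ↔ ∀ i, G.owner (ρ i) = j → ρ (i + 1) = σ (Hist ρ i) (ρ i) :=
  Iff.rfl

/-- Build a play from a step function taking (history, current state). -/
noncomputable def bp (F : List S → S → S) (s : S) : ℕ → List S × S
  | 0 => ([], s)
  | n + 1 => ((bp F s n).1 ++ [(bp F s n).2], F (bp F s n).1 (bp F s n).2)

noncomputable def bPlay (F : List S → S → S) (s : S) (n : ℕ) : S := (bp F s n).2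

theorem bp_fst (F : List S → S → S) (s : S) (n : ℕ) :
    (bp F s n).1 = Hist (bPlay F s) n := by
  induction n with
  | zero => simp [bp, Hist]
  | succ n ih => rw [bp, ih, hist_succ]; rfl

theorem bPlay_zero (F : List S → S → S) (s : S) : bPlay F s 0 = s := rfl

theorem bPlay_succ (F : List S → S → S) (s : S) (n : ℕ) :
    bPlay F s (n + 1) = F (Hist (bPlay F s) n) (bPlay F s n) := by
  rw [← bp_fst]; rfl

/-- Construct a strictly increasing enumeration of positions satisfying `Pred`. -/
theorem mkIdx {Pred : ℕ → Prop} (H : ∀ n, ∃ q, n < q ∧ Pred q) :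
    ∃ idx : ℕ → ℕ, idx 0 = 0 ∧ ∀ ℓ, idx ℓ < idx (ℓ + 1) ∧ Pred (idx (ℓ + 1)) := by
  refine ⟨fun n => Nat.rec 0 (fun _ prev => (H prev).choose) n, rfl, fun ℓ => ?_⟩
  exact ⟨(H _).choose_spec.1, (H _).choose_spec.2⟩

/-! ### relative game notions -/

variable (G : ParityGame S) (j : Fin 2)

def StratOn (D : Set S) (σ : List S → S → S) : Prop :=
  ∀ h u, u ∈ D → σ h u ∈ D ∧ G.R u (σ h u)

def WinsOn (D : Set S) (s : S) : Prop :=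
  ∃ σ, StratOn G D σ ∧ ∀ ρ, G.IsPlay ρ → (∀ i, ρ i ∈ D) → ρ 0 = s →
    G.Compatible j σ ρ → InOmega j (G.colorSeq ρ)

def CoreOn (D : Set S) (s : S) : Prop :=
  ∃ σ, StratOn G D σ ∧ ∀ ρ, G.IsPlay ρ → (∀ i, ρ i ∈ D) → ρ 0 = s →
    G.Compatible j σ ρ → G.BeginsInfDom j ρ

/-- A choice of successor within a `D`-total set. -/
noncomputable def choD (D : Set S) (hD : ∀ s ∈ D, ∃ t ∈ D, G.R s t) (u : S) : S :=
  if hu : u ∈ D then (hD u hu).choose else (G.total u).choose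

theorem choD_spec (D : Set S) (hD : ∀ s ∈ D, ∃ t ∈ D, G.R s t) {u : S} (hu : u ∈ D) :
    choD G D hD u ∈ D ∧ G.R u (choD G D hD u) := by
  rw [choD, dif_pos hu]
  exact ⟨(hD u hu).choose_spec.1, (hD u hu).choose_spec.2⟩

/-! ### attractors (relative to a subgame `D`, for the player owning states in `P`) -/

def AttN (P : S → Prop) (D T : Set S) : ℕ → Set S
  | 0 => T
  | n + 1 => AttN P D T n ∪ {s | s ∈ D ∧
      ((P s ∧ ∃ t, G.R s t ∧ t ∈ D ∧ t ∈ AttN P D T n) ∨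
       (¬ P s ∧ ∀ t, G.R s t → t ∈ D → t ∈ AttN P D T n))}

def Att (P : S → Prop) (D T : Set S) : Set S := ⋃ n, AttN G P D T n

variable {G} {P : S → Prop} {D T : Set S}

theorem attN_mono_succ (n : ℕ) : AttN G P D T n ⊆ AttN G P D T (n + 1) :=
  Set.subset_union_left

theorem attN_mono {m n : ℕ} (h : m ≤ n) : AttN G P D T m ⊆ AttN G P D T n := by
  induction n with
  | zero => simpa [Nat.le_zero.mp h] using Set.Subset.rfl
  | succ n ih =>
    rcases Nat.lt_or_ge m (n+1) with h'|h'
    · exact (ih (by omega)).trans (attN_mono_succ n)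
    · have : m = n + 1 := by omega
      subst this; rfl

theorem attN_subset_D (hT : T ⊆ D) : ∀ n, AttN G P D T n ⊆ D
  | 0 => hT
  | n + 1 => by
    rintro s (hs | ⟨hs, -⟩)
    · exact attN_subset_D hT n hs
    · exact hs

theorem att_subset_D (hT : T ⊆ D) : Att G P D T ⊆ D := by
  rintro s hs
  obtain ⟨n, hn⟩ := Set.mem_iUnion.mp hs
  exact attN_subset_D hT n hn

theorem subset_att : T ⊆ Att G P D T := fun s hs => Set.mem_iUnion.mpr ⟨0, hs⟩

/-- one-step closure: if a `P`-state in `D` has a legal `D`-successor in the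
attractor then it is in the attractor. -/
theorem att_own {s t : S} (hs : s ∈ D) (hP : P s) (hR : G.R s t) (ht : t ∈ D)
    (htA : t ∈ Att G P D T) : s ∈ Att G P D T := by
  obtain ⟨n, hn⟩ := Set.mem_iUnion.mp htA
  exact Set.mem_iUnion.mpr ⟨n + 1, Or.inr ⟨hs, Or.inl ⟨hP, t, hR, ht, hn⟩⟩⟩

/-- one-step closure for non-`P` states (uses finiteness of `S`). -/
theorem att_opp [Fintype S] {s : S} (hs : s ∈ D) (hP : ¬ P s)
    (h : ∀ t, G.R s t → t ∈ D → t ∈ Att G P D T) : s ∈ Att G P D T := by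
  classical
  have hch : ∀ t : S, ∃ n, G.R s t → t ∈ D → t ∈ AttN G P D T n := by
    intro t
    by_cases ht : G.R s t ∧ t ∈ D
    · obtain ⟨n, hn⟩ := Set.mem_iUnion.mp (h t ht.1 ht.2)
      exact ⟨n, fun _ _ => hn⟩
    · exact ⟨0, fun h1 h2 => absurd ⟨h1, h2⟩ ht⟩
  choose f hf using hch
  set N := Finset.univ.sup f with hN
  refine Set.mem_iUnion.mpr ⟨N + 1, Or.inr ⟨hs, Or.inr ⟨hP, fun t hR hD => ?_⟩⟩⟩
  exact attN_mono (Finset.le_sup (Finset.mem_univ t)) (hf t hR hD)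

noncomputable def rankA (G : ParityGame S) (P : S → Prop) (D T : Set S) (s : S) : ℕ :=
  if h : s ∈ Att G P D T then Nat.find (Set.mem_iUnion.mp h) else 0

theorem rankA_spec {s : S} (h : s ∈ Att G P D T) :
    s ∈ AttN G P D T (rankA G P D T s) := by
  rw [rankA, dif_pos h]; exact Nat.find_spec (Set.mem_iUnion.mp h)

theorem rankA_min {s : S} (h : s ∈ Att G P D T) {n : ℕ} (hn : s ∈ AttN G P D T n) :
    rankA G P D T s ≤ n := by
  rw [rankA, dif_pos h]; exact Nat.find_min' _ hn

theorem rankA_mem_of_lt {s : S} {n : ℕ} (hn : s ∈ AttN G P D T n) : s ∈ Att G P D T :=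
  Set.mem_iUnion.mpr ⟨n, hn⟩

/-- a `P`-state of the attractor outside `T` has a legal `D`-move of smaller rank. -/
theorem rankA_own {s : S} (h : s ∈ Att G P D T) (hsT : s ∉ T) (hP : P s) :
    ∃ t, G.R s t ∧ t ∈ D ∧ t ∈ Att G P D T ∧ rankA G P D T t < rankA G P D T s := by
  have hs := rankA_spec h
  rcases hr : rankA G P D T s with _ | n
  · rw [hr] at hs; exact absurd hs hsT
  · rw [hr] at hs
    rcases hs with hs | ⟨-, hs | hs⟩
    · have := rankA_min h hs; omega
    · obtain ⟨-, t, hR, hD, htn⟩ := hs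
      exact ⟨t, hR, hD, rankA_mem_of_lt htn, by
        have := rankA_min (rankA_mem_of_lt htn) htn; omega⟩
    · exact absurd hP hs.1

/-- at a non-`P`-state of the attractor outside `T`, every legal `D`-move has smaller rank. -/
theorem rankA_opp {s : S} (h : s ∈ Att G P D T) (hsT : s ∉ T) (hP : ¬ P s)
    {t : S} (hR : G.R s t) (hD : t ∈ D) :
    t ∈ Att G P D T ∧ rankA G P D T t < rankA G P D T s := by
  have hs := rankA_spec h
  rcases hr : rankA G P D T s with _ | n
  · rw [hr] at hs; exact absurd hs hsT
  · rw [hr] at hs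
    rcases hs with hs | ⟨-, hs | hs⟩
    · have := rankA_min h hs; omega
    · exact absurd hs.1 hP
    · have htn := hs.2 t hR hD
      exact ⟨rankA_mem_of_lt htn, by have := rankA_min (rankA_mem_of_lt htn) htn; omega⟩

/-- complement of attractor, `P`-states: every legal `D`-move stays outside. -/
theorem compl_att_own {s t : S} (hs : s ∈ D) (hsA : s ∉ Att G P D T) (hP : P s)
    (hR : G.R s t) (ht : t ∈ D) : t ∉ Att G P D T :=
  fun htA => hsA (att_own hs hP hR ht htA)

/-- complement of attractor, non-`P`-states: some legal `D`-move stays outside. -/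
theorem compl_att_opp [Fintype S] {s : S} (hs : s ∈ D) (hsA : s ∉ Att G P D T)
    (hP : ¬ P s) : ∃ t, G.R s t ∧ t ∈ D ∧ t ∉ Att G P D T := by
  by_contra hc
  push_neg at hc
  exact hsA (att_opp hs hP fun t hR hD => hc t hR hD)

/-- descent: a play that decreases rank while in `Att \ T` eventually reaches `T`. -/
theorem att_descent {ρ : ℕ → S} {p : ℕ} (hp : ρ p ∈ Att G P D T)
    (hdesc : ∀ i, p ≤ i → ρ i ∈ Att G P D T → ρ i ∉ T →
      ρ (i+1) ∈ Att G P D T ∧ rankA G P D T (ρ (i+1)) < rankA G P D T (ρ i)) :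
    ∃ q, p ≤ q ∧ ρ q ∈ T := by
  by_cases hT : ρ p ∈ T
  · exact ⟨p, le_rfl, hT⟩
  · obtain ⟨hA', hlt⟩ := hdesc p le_rfl hp hT
    have : ∀ k p', rankA G P D T (ρ p') = k → ρ p' ∈ Att G P D T →
        (∀ i, p' ≤ i → ρ i ∈ Att G P D T → ρ i ∉ T →
          ρ (i+1) ∈ Att G P D T ∧ rankA G P D T (ρ (i+1)) < rankA G P D T (ρ i)) →
        ∃ q, p' ≤ q ∧ ρ q ∈ T := by
      intro k
      induction k using Nat.strong_induction_on with
      | _ k ih =>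
        intro p' hk hA hd
        by_cases hT' : ρ p' ∈ T
        · exact ⟨p', le_rfl, hT'⟩
        · obtain ⟨hA2, hlt2⟩ := hd p' le_rfl hA hT'
          obtain ⟨q, hq, hqT⟩ := ih _ (hk ▸ hlt2) (p' + 1) rfl hA2
            (fun i hi => hd i (by omega))
          exact ⟨q, by omega, hqT⟩
    exact this _ p rfl hp hdesc

/-! ### splitting a history into stem and Y-run -/

theorem takeWhile_append_of_all {α : Type*} (p : α → Bool) (a b : List α)
    (h : ∀ x ∈ a, p x) : (a ++ b).takeWhile p = a ++ b.takeWhile p := by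
  induction a with
  | nil => rfl
  | cons x xs ih =>
    simp only [List.cons_append, List.takeWhile_cons, h x (by simp), if_true]
    simp only [ih fun y hy => h y (by simp [hy])]

theorem dropWhile_append_of_all {α : Type*} (p : α → Bool) (a b : List α)
    (h : ∀ x ∈ a, p x) : (a ++ b).dropWhile p = b.dropWhile p := by
  induction a with
  | nil => rfl
  | cons x xs ih =>
    simp only [List.cons_append, List.dropWhile_cons, h x (by simp)]
    exact ih fun y hy => h y (by simp [hy])

attribute [local instance] Classical.propDecidable

noncomputable def runY (Y : Set S) (l : List S) : List S :=
  (l.reverse.takeWhile (fun x => decide (x ∈ Y))).reverse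

noncomputable def stemY (Y : Set S) (l : List S) : List S :=
  (l.reverse.dropWhile (fun x => decide (x ∈ Y))).reverse

theorem run_stem_eq {Y : Set S} (l₁ l₂ : List S) (h₂ : ∀ x ∈ l₂, x ∈ Y)
    (h₁ : l₁ = [] ∨ ∃ l₀ z, l₁ = l₀ ++ [z] ∧ z ∉ Y) :
    runY Y (l₁ ++ l₂) = l₂ ∧ stemY Y (l₁ ++ l₂) = l₁ := by
  have hall : ∀ x ∈ l₂.reverse, (fun x => decide (x ∈ Y)) x = true := by
    intro x hx
    simp only [decide_eq_true_eq]
    exact h₂ x (List.mem_reverse.mp hx)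
  rcases h₁ with rfl | ⟨l₀, z, rfl, hz⟩
  · constructor
    · rw [runY]
      simp only [List.nil_append, List.reverse_reverse]
      rw [List.takeWhile_eq_self_iff.mpr hall, List.reverse_reverse]
    · rw [stemY]
      simp only [List.nil_append]
      rw [List.dropWhile_eq_nil_iff.mpr (fun x hx => hall x hx)]
      rfl
  · have hrev : (l₀ ++ [z] ++ l₂).reverse = l₂.reverse ++ (z :: l₀.reverse) := by simp
    constructor
    · rw [runY, hrev, takeWhile_append_of_all _ _ _ hall,
        List.takeWhile_cons_of_neg (by simp [hz])]
      simp
    · rw [stemY, hrev, dropWhile_append_of_all _ _ _ hall,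
        List.dropWhile_cons_of_neg (by simp [hz])]
      simp

/-- run/stem of a history of a play whose last exit from `Y` is at position `q`. -/
theorem run_stem_hist {Y : Set S} {ρ : ℕ → S} {q i : ℕ} (hq : q < i) (hqY : ρ q ∉ Y)
    (h : ∀ k, q < k → k < i → ρ k ∈ Y) :
    runY Y (Hist ρ i) = Hist (fun k => ρ (q + 1 + k)) (i - (q + 1)) ∧
    stemY Y (Hist ρ i) = Hist ρ (q + 1) := by
  have hsplit : Hist ρ i = Hist ρ (q + 1) ++ Hist (fun k => ρ (q + 1 + k)) (i - (q + 1)) := by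
    rw [← hist_add]; congr 1; omega
  rw [hsplit]
  refine run_stem_eq _ _ ?_ (Or.inr ⟨Hist ρ q, ρ q, hist_succ ρ q, hqY⟩)
  intro x hx
  rw [Hist, List.mem_ofFn] at hx
  obtain ⟨k, rfl⟩ := hx
  exact h _ (by omega) (by omega)

/-- run/stem of a history entirely inside `Y`. -/
theorem run_stem_hist_all {Y : Set S} {ρ : ℕ → S} {i : ℕ} (h : ∀ k, k < i → ρ k ∈ Y) :
    runY Y (Hist ρ i) = Hist ρ i ∧ stemY Y (Hist ρ i) = [] := by
  have := run_stem_eq (Y := Y) [] (Hist ρ i) ?_ (Or.inl rfl)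
  · simpa using this
  · intro x hx
    rw [Hist, List.mem_ofFn] at hx
    obtain ⟨k, rfl⟩ := hx
    exact h _ (by omega)

/-! ### segment domination helper -/

theorem segDom_of_maxwit {G : ParityGame S} {j : Fin 2} {ρ : ℕ → S} {a b w d : ℕ}
    (hab : a < b) (hw1 : a + 1 ≤ w) (hw2 : w ≤ b) (hcw : G.c (ρ w) = d)
    (hbound : ∀ k, a + 1 ≤ k → k ≤ b → G.c (ρ k) ≤ d) (hpar : d % 2 = (j : ℕ)) :
    G.SegDom j ρ a b := by
  refine ⟨hab, ?_⟩
  have hsup : ((Finset.Icc (a + 1) b).sup fun k => G.c (ρ k)) = d := by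
    apply le_antisymm
    · exact Finset.sup_le fun k hk => by
        obtain ⟨h1, h2⟩ := Finset.mem_Icc.mp hk
        exact hbound k h1 h2
    · have h2 := Finset.le_sup (f := fun k => G.c (ρ k)) (Finset.mem_Icc.mpr ⟨hw1, hw2⟩)
      exact le_of_eq_of_le hcw.symm h2
  rw [hsup]; exact hpar

/-! ### shifting a winning state along an edge -/

def consSeq (s : S) (ρ : ℕ → S) : ℕ → S
  | 0 => s
  | n + 1 => ρ n

theorem hist_consSeq (s : S) (ρ : ℕ → S) (i : ℕ) :
    Hist (consSeq s ρ) (i + 1) = s :: Hist ρ i := by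
  rw [Hist, List.ofFn_succ]
  rfl

theorem winsOn_step {G : ParityGame S} {j : Fin 2} {D : Set S} {s t : S}
    (hs : s ∈ D) (ht : t ∈ D) {σ : List S → S → S} (hσ : StratOn G D σ)
    (hwin : ∀ ρ, G.IsPlay ρ → (∀ i, ρ i ∈ D) → ρ 0 = s → G.Compatible j σ ρ →
      InOmega j (G.colorSeq ρ))
    (hR : G.R s t) (hj : G.owner s = j → t = σ [] s) : WinsOn G j D t := by
  refine ⟨fun h u => σ (s :: h) u, fun h u hu => hσ (s :: h) u hu, ?_⟩
  intro ρ' hplay' hin' h0' hcomp'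
  have hplay : G.IsPlay (consSeq s ρ') := by
    intro i
    cases i with
    | zero => show G.R s (ρ' 0); rw [h0']; exact hR
    | succ i => exact hplay' i
  have hin : ∀ i, consSeq s ρ' i ∈ D := by
    intro i; cases i with
    | zero => exact hs
    | succ i => exact hin' i
  have hcomp : G.Compatible j σ (consSeq s ρ') := by
    intro i hown
    cases i with
    | zero =>
      show ρ' 0 = σ (List.ofFn fun k : Fin 0 => consSeq s ρ' k.val) s
      simp only [List.ofFn_zero]
      rw [h0', hj hown]
    | succ i =>
      show ρ' (i + 1) = σ (List.ofFn fun k : Fin (i+1) => consSeq s ρ' k.val) (ρ' i)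
      rw [show (List.ofFn fun k : Fin (i+1) => consSeq s ρ' k.val) = s :: Hist ρ' i
        from hist_consSeq s ρ' i]
      exact hcomp' i hown
  have hΩ := hwin (consSeq s ρ') hplay hin rfl hcomp
  have h2 := inOmega_shift 1 hΩ
  convert h2 using 1
  funext i
  show G.c (ρ' i) = G.c (consSeq s ρ' (1 + i))
  rw [Nat.add_comm 1 i]
  rfl

theorem winsOn_succ_opp {G : ParityGame S} {j : Fin 2} {D : Set S} {s t : S}
    (hs : s ∈ D) (hwins : WinsOn G j D s) (hown : G.owner s ≠ j)
    (hR : G.R s t) (ht : t ∈ D) : WinsOn G j D t := by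
  obtain ⟨σ, hσ, hwin⟩ := hwins
  exact winsOn_step hs ht hσ hwin hR (fun h => absurd h hown)

theorem winsOn_succ_own {G : ParityGame S} {j : Fin 2} {D : Set S} {s : S}
    (hs : s ∈ D) (hwins : WinsOn G j D s) :
    ∃ t ∈ D, G.R s t ∧ WinsOn G j D t := by
  obtain ⟨σ, hσ, hwin⟩ := hwins
  obtain ⟨htD, htR⟩ := hσ [] s hs
  exact ⟨σ [] s, htD, htR, winsOn_step hs htD hσ hwin htR (fun _ => rfl)⟩

/-! ### transferring a core state from a closed subregion -/

theorem coreOn_mono {G : ParityGame S} {j : Fin 2} {D' D : Set S} (hsub : D' ⊆ D)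
    (hD : ∀ s ∈ D, ∃ t ∈ D, G.R s t)
    (hclosedopp : ∀ u ∈ D', G.owner u ≠ j → ∀ v, G.R u v → v ∈ D → v ∈ D')
    {t : S} (ht : t ∈ D') (hcore : CoreOn G j D' t) : CoreOn G j D t := by
  classical
  obtain ⟨σc, hσc, hcg⟩ := hcore
  refine ⟨fun h u => if u ∈ D' then σc h u else choD G D hD u, ?_, ?_⟩
  · intro h u hu
    by_cases hu' : u ∈ D'
    · constructor
      · show (if u ∈ D' then σc h u else choD G D hD u) ∈ D
        rw [if_pos hu']; exact hsub (hσc h u hu').1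
      · show G.R u (if u ∈ D' then σc h u else choD G D hD u)
        rw [if_pos hu']; exact (hσc h u hu').2
    · constructor
      · show (if u ∈ D' then σc h u else choD G D hD u) ∈ D
        rw [if_neg hu']; exact (choD_spec G D hD hu).1
      · show G.R u (if u ∈ D' then σc h u else choD G D hD u)
        rw [if_neg hu']; exact (choD_spec G D hD hu).2
  · intro ρ hplay hin h0 hcomp
    have hin' : ∀ i, ρ i ∈ D' := by
      intro i
      induction i with
      | zero => exact h0 ▸ ht
      | succ i ih =>
        by_cases hown : G.owner (ρ i) = j
        · rw [hcomp i hown]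
          show (if ρ i ∈ D' then σc _ (ρ i) else choD G D hD (ρ i)) ∈ D'
          rw [if_pos ih]
          exact (hσc _ _ ih).1
        · exact hclosedopp _ ih hown _ (hplay i) (hin (i + 1))
    have hcomp' : G.Compatible j σc ρ := by
      intro i hown
      rw [hcomp i hown]
      show (if ρ i ∈ D' then σc _ (ρ i) else choD G D hD (ρ i)) = _
      rw [if_pos (hin' i)]
    exact hcg ρ hplay hin' h0 hcomp'

/-! ### reachability closure of relative winning regions -/

theorem hist_congr {f g : ℕ → S} {n : ℕ} (h : ∀ k, k < n → f k = g k) :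
    Hist f n = Hist g n := by
  rw [Hist, Hist]
  congr 1
  funext k
  exact h k.val k.isLt

theorem winsOn_reach {G : ParityGame S} {j : Fin 2} {D : Set S} {σ : List S → S → S}
    (hσ : StratOn G D σ) {s₀ : S}
    (hwin : ∀ ρ, G.IsPlay ρ → (∀ i, ρ i ∈ D) → ρ 0 = s₀ → G.Compatible j σ ρ →
      InOmega j (G.colorSeq ρ))
    {ρ : ℕ → S} {i : ℕ}
    (hpre : ∀ n, n < i → G.R (ρ n) (ρ (n + 1)))
    (hpreD : ∀ n, n ≤ i → ρ n ∈ D)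
    (h0 : ρ 0 = s₀)
    (hprec : ∀ n, n < i → G.owner (ρ n) = j →
      ρ (n + 1) = σ (Hist ρ n) (ρ n)) :
    ∀ ρ'', G.IsPlay ρ'' → (∀ k, ρ'' k ∈ D) → ρ'' 0 = ρ i →
      G.Compatible j (fun k v => σ (Hist ρ i ++ k) v) ρ'' →
      InOmega j (G.colorSeq ρ'') := by
  classical
  intro ρ'' hp'' hD'' h0'' hc''
  set ρs : ℕ → S := fun n => if n < i then ρ n else ρ'' (n - i) with hρs
  have hlt : ∀ n, n < i → ρs n = ρ n := fun n hn => if_pos hn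
  have hge : ∀ k, ρs (i + k) = ρ'' k := by
    intro k
    show (if i + k < i then _ else ρ'' (i + k - i)) = ρ'' k
    rw [if_neg (by omega)]
    congr 1
    omega
  have hle : ∀ n, n ≤ i → ρs n = ρ n := by
    intro n hn
    rcases Nat.lt_or_ge n i with h | h
    · exact hlt n h
    · have : n = i := by omega
      subst this
      have := hge 0
      rw [Nat.add_zero] at this
      rw [this, h0'']
  have hhle : ∀ n, n ≤ i → Hist ρs n = Hist ρ n :=
    fun n hn => hist_congr fun k hk => hle k (by omega)
  have hhge : ∀ k, Hist ρs (i + k) = Hist ρ i ++ Hist ρ'' k := by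
    intro k
    rw [hist_add, hhle i le_rfl]
    congr 1
    exact hist_congr fun m _ => hge m
  have hplay : G.IsPlay ρs := by
    intro n
    rcases Nat.lt_or_ge n i with h | h
    · rw [hlt n h, hle (n + 1) (by omega)]
      exact hpre n h
    · obtain ⟨k, rfl⟩ := Nat.exists_eq_add_of_le h
      rw [hge k, show i + k + 1 = i + (k + 1) by omega, hge (k + 1)]
      exact hp'' k
  have hinD : ∀ n, ρs n ∈ D := by
    intro n
    rcases Nat.lt_or_ge n i with h | h
    · rw [hlt n h]; exact hpreD n (by omega)
    · obtain ⟨k, rfl⟩ := Nat.exists_eq_add_of_le h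
      rw [hge k]; exact hD'' k
  have h0s : ρs 0 = s₀ := by rw [hle 0 (by omega)]; exact h0
  have hcomp : G.Compatible j σ ρs := by
    intro n hown
    rcases Nat.lt_or_ge n i with h | h
    · rw [hlt n h] at hown
      show ρs (n + 1) = σ (Hist ρs n) (ρs n)
      rw [hle (n + 1) (by omega), hhle n (by omega), hlt n h]
      exact hprec n h hown
    · obtain ⟨k, rfl⟩ := Nat.exists_eq_add_of_le h
      rw [hge k] at hown
      show ρs (i + k + 1) = σ (Hist ρs (i + k)) (ρs (i + k))
      rw [show i + k + 1 = i + (k + 1) by omega, hge (k + 1), hhge k, hge k]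
      exact hc'' k hown
  have hΩ := hwin ρs hplay hinD h0s hcomp
  have h2 := inOmega_shift i hΩ
  convert h2 using 1
  funext k
  show G.c (ρ'' k) = G.c (ρs (i + k))
  rw [hge k]

/-- along a compatible prefix of a winning strategy, all visited states are winning. -/
theorem winsOn_reach' {G : ParityGame S} {j : Fin 2} {D : Set S} {σ : List S → S → S}
    (hσ : StratOn G D σ) {s₀ : S}
    (hwin : ∀ ρ, G.IsPlay ρ → (∀ i, ρ i ∈ D) → ρ 0 = s₀ → G.Compatible j σ ρ →
      InOmega j (G.colorSeq ρ))
    {ρ : ℕ → S} {i : ℕ}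
    (hpre : ∀ n, n < i → G.R (ρ n) (ρ (n + 1)))
    (hpreD : ∀ n, n ≤ i → ρ n ∈ D)
    (h0 : ρ 0 = s₀)
    (hprec : ∀ n, n < i → G.owner (ρ n) = j →
      ρ (n + 1) = σ (Hist ρ n) (ρ n)) :
    WinsOn G j D (ρ i) := by
  refine ⟨fun k v => σ (Hist ρ i ++ k) v, fun k v hv => hσ (Hist ρ i ++ k) v hv, ?_⟩
  exact winsOn_reach hσ hwin hpre hpreD h0 hprec

/-! ### the relative winning region -/

def WinRegOn (G : ParityGame S) (j : Fin 2) (D : Set S) : Set S :=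
  {s | s ∈ D ∧ WinsOn G j D s}

theorem winRegOn_tot {G : ParityGame S} {j : Fin 2} {D : Set S}
    (hDtot : ∀ s ∈ D, ∃ t ∈ D, G.R s t) :
    ∀ s ∈ WinRegOn G j D, ∃ t ∈ WinRegOn G j D, G.R s t := by
  rintro s ⟨hsD, hs⟩
  by_cases hown : G.owner s = j
  · obtain ⟨t, htD, hR, hw⟩ := winsOn_succ_own hsD hs
    exact ⟨t, ⟨htD, hw⟩, hR⟩
  · obtain ⟨t, htD, hR⟩ := hDtot s hsD
    exact ⟨t, ⟨htD, winsOn_succ_opp hsD hs hown hR htD⟩, hR⟩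

theorem winRegOn_opp_closed {G : ParityGame S} {j : Fin 2} {D : Set S} :
    ∀ u ∈ WinRegOn G j D, G.owner u ≠ j → ∀ v, G.R u v → v ∈ D →
      v ∈ WinRegOn G j D := by
  rintro u ⟨huD, hu⟩ hown v hR hvD
  exact ⟨hvD, winsOn_succ_opp huD hu hown hR hvD⟩

/-- a state winning on `D` is winning on the winning region of `D`. -/
theorem winsOn_winRegOn {G : ParityGame S} {j : Fin 2} {D : Set S}
    (hDtot : ∀ s ∈ D, ∃ t ∈ D, G.R s t) {s₀ : S} (hs₀ : s₀ ∈ D)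
    (hw : WinsOn G j D s₀) : WinsOn G j (WinRegOn G j D) s₀ := by
  classical
  obtain ⟨σ, hσ, hwin⟩ := hw
  set W := WinRegOn G j D with hW
  have hWtot := winRegOn_tot (G := G) (j := j) hDtot
  refine ⟨fun h u => if σ h u ∈ W then σ h u else choD G W hWtot u, ?_, ?_⟩
  · intro h u hu
    by_cases hc : σ h u ∈ W
    · constructor
      · show (if σ h u ∈ W then σ h u else _) ∈ W
        rw [if_pos hc]; exact hc
      · show G.R u (if σ h u ∈ W then σ h u else _)
        rw [if_pos hc]; exact (hσ h u hu.1).2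
    · constructor
      · show (if σ h u ∈ W then σ h u else _) ∈ W
        rw [if_neg hc]; exact (choD_spec G W hWtot hu).1
      · show G.R u (if σ h u ∈ W then σ h u else _)
        rw [if_neg hc]; exact (choD_spec G W hWtot hu).2
  · intro ρ hplay hin h0 hcomp
    -- the play is in fact compatible with σ
    have hkey : ∀ i, G.owner (ρ i) = j → ρ (i + 1) = σ (Hist ρ i) (ρ i) := by
      intro i
      induction i using Nat.strong_induction_on with
      | _ i ih =>
        intro hown
        have hwreach : WinsOn G j D (ρ i) :=
          winsOn_reach' hσ hwin (fun n _ => hplay n) (fun n _ => (hin n).1) h0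
            (fun n hn hon => ih n hn hon)
        have hσi : StratOn G D (fun k v => σ (Hist ρ i ++ k) v) :=
          fun k v hv => hσ (Hist ρ i ++ k) v hv
        have hwini := winsOn_reach hσ hwin (fun n _ => hplay n) (fun n _ => (hin n).1) h0
          (fun n hn hon => ih n hn hon)
        have htD : σ (Hist ρ i) (ρ i) ∈ D := (hσ (Hist ρ i) (ρ i) (hin i).1).1
        have hR : G.R (ρ i) (σ (Hist ρ i) (ρ i)) := (hσ (Hist ρ i) (ρ i) (hin i).1).2
        have hw' : WinsOn G j D (σ (Hist ρ i) (ρ i)) := by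
          refine winsOn_step (hin i).1 htD hσi hwini hR (fun _ => ?_)
          show _ = σ (Hist ρ i ++ []) (ρ i)
          rw [List.append_nil]
        have hmem : σ (Hist ρ i) (ρ i) ∈ W := ⟨htD, hw'⟩
        have hc2 := hcomp i hown
        rw [hc2]
        show (if σ (Hist ρ i) (ρ i) ∈ W then _ else _) = _
        rw [if_pos hmem]
        rfl
    exact hwin ρ hplay (fun i => (hin i).1) h0 hkey

/-! ### main lemma, case: top color has player `j`'s parity -/

theorem good_case [Fintype S] {G : ParityGame S} {j : Fin 2} {D : Set S} {d : ℕ}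
    (hDtot : ∀ s ∈ D, ∃ t ∈ D, G.R s t)
    (hne : D.Nonempty)
    (hall : ∀ s ∈ D, WinsOn G j D s)
    (hbound : ∀ u ∈ D, G.c u ≤ d)
    (hTex : ∃ u ∈ D, G.c u = d)
    (hpar : d % 2 = (j : ℕ))
    (IH : ∀ E : Set S, E.ncard < D.ncard → (∀ s ∈ E, ∃ t ∈ E, G.R s t) →
      (∃ s ∈ E, WinsOn G j E s) → ∃ t ∈ E, CoreOn G j E t) :
    ∃ t ∈ D, CoreOn G j D t := by
  classical
  set P : S → Prop := fun s => G.owner s = j with hPdef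
  set T : Set S := {u | u ∈ D ∧ G.c u = d} with hTdef
  set A : Set S := Att G P D T with hAdef
  have hTD : T ⊆ D := fun u hu => hu.1
  have hAD : A ⊆ D := att_subset_D hTD
  set Y : Set S := D \ A with hYdef
  have hYD : Y ⊆ D := Set.diff_subset
  -- choice of a rank-decreasing move for player j in the attractor
  have hamov' : ∀ u, ∃ v, u ∈ A → u ∉ T → P u →
      G.R u v ∧ v ∈ D ∧ v ∈ A ∧ rankA G P D T v < rankA G P D T u := by
    intro u
    by_cases hu : u ∈ A ∧ u ∉ T ∧ P u
    · obtain ⟨v, h1, h2, h3, h4⟩ := rankA_own hu.1 hu.2.1 hu.2.2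
      exact ⟨v, fun _ _ _ => ⟨h1, h2, h3, h4⟩⟩
    · exact ⟨u, fun h1 h2 h3 => absurd ⟨h1, h2, h3⟩ hu⟩
  choose amov hamov using hamov'
  -- forcing: plays following `amov` inside `A \ T` reach `T`
  have hreach : ∀ ρ : ℕ → S, G.IsPlay ρ → (∀ i, ρ i ∈ D) →
      (∀ i, ρ i ∈ A → ρ i ∉ T → G.owner (ρ i) = j → ρ (i + 1) = amov (ρ i)) →
      ∀ p, ρ p ∈ A → ∃ q, p ≤ q ∧ ρ q ∈ T := by
    intro ρ hplay hin hmv p hp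
    refine att_descent hp ?_
    intro i _ hiA hiT
    by_cases hown : G.owner (ρ i) = j
    · have h2 := hmv i hiA hiT hown
      obtain ⟨-, -, h3, h4⟩ := hamov (ρ i) hiA hiT hown
      rw [h2]
      exact ⟨h3, h4⟩
    · exact rankA_opp hiA hiT hown (hplay i) (hin (i + 1))
  -- plays visiting T infinitely often decompose
  have hcutT : ∀ ρ : ℕ → S, (∀ i, ρ i ∈ D) → (∀ p, ∃ q, p < q ∧ ρ q ∈ T) →
      G.BeginsInfDom j ρ := by
    intro ρ hin hinf
    obtain ⟨idx, h0, hstep⟩ := mkIdx hinf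
    refine ⟨idx, h0, fun ℓ => ?_⟩
    obtain ⟨hlt, hqT⟩ := hstep ℓ
    exact segDom_of_maxwit hlt (by omega) le_rfl hqT.2
      (fun k _ _ => hbound _ (hin k)) hpar
  by_cases hYe : Y = ∅
  · -- the whole of D is the attractor: every state is in the core
    have hDA : ∀ u ∈ D, u ∈ A := by
      intro u hu
      by_contra h
      exact absurd (hYe ▸ (⟨hu, h⟩ : u ∈ Y)) (Set.notMem_empty u)
    obtain ⟨t, ht⟩ := hne
    refine ⟨t, ht, fun h u => if u ∈ A ∧ u ∉ T ∧ G.owner u = j then amov u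
      else choD G D hDtot u, ?_, ?_⟩
    · intro h u hu
      by_cases hc : u ∈ A ∧ u ∉ T ∧ G.owner u = j
      · constructor
        · show (if u ∈ A ∧ u ∉ T ∧ G.owner u = j then amov u else _) ∈ D
          rw [if_pos hc]
          exact (hamov u hc.1 hc.2.1 hc.2.2).2.1
        · show G.R u (if u ∈ A ∧ u ∉ T ∧ G.owner u = j then amov u else _)
          rw [if_pos hc]
          exact (hamov u hc.1 hc.2.1 hc.2.2).1
      · constructor
        · show (if u ∈ A ∧ u ∉ T ∧ G.owner u = j then amov u else _) ∈ D
          rw [if_neg hc]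
          exact (choD_spec G D hDtot hu).1
        · show G.R u (if u ∈ A ∧ u ∉ T ∧ G.owner u = j then amov u else _)
          rw [if_neg hc]
          exact (choD_spec G D hDtot hu).2
    · intro ρ hplay hin h0 hcomp
      have hmv : ∀ i, ρ i ∈ A → ρ i ∉ T → G.owner (ρ i) = j →
          ρ (i + 1) = amov (ρ i) := by
        intro i h1 h2 h3
        rw [hcomp i h3]
        show (if ρ i ∈ A ∧ ρ i ∉ T ∧ G.owner (ρ i) = j then amov (ρ i) else _) = _
        rw [if_pos ⟨h1, h2, h3⟩]
      refine hcutT ρ hin ?_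
      intro p
      obtain ⟨q, hq, hqT⟩ := hreach ρ hplay hin hmv (p + 1) (hDA _ (hin (p + 1)))
      exact ⟨q, by omega, hqT⟩
  · -- Y is a nonempty trap for player j
    have hYtot : ∀ u ∈ Y, ∃ v ∈ Y, G.R u v := by
      intro u hu
      by_cases hown : G.owner u = j
      · obtain ⟨v, hvD, hR⟩ := hDtot u hu.1
        exact ⟨v, ⟨hvD, compl_att_own hu.1 hu.2 hown hR hvD⟩, hR⟩
      · obtain ⟨v, hR, hvD, hvA⟩ := compl_att_opp hu.1 hu.2 hown
        exact ⟨v, ⟨hvD, hvA⟩, hR⟩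
    -- every state of Y wins the restricted game on Y
    have hYwins : ∀ w ∈ Y, WinsOn G j Y w := by
      intro w hw
      obtain ⟨σ, hσ, hwin⟩ := hall w hw.1
      refine ⟨fun h u => if σ h u ∈ Y then σ h u else choD G Y hYtot u, ?_, ?_⟩
      · intro h u hu
        by_cases hc : σ h u ∈ Y
        · constructor
          · show (if σ h u ∈ Y then σ h u else _) ∈ Y
            rw [if_pos hc]; exact hc
          · show G.R u (if σ h u ∈ Y then σ h u else _)
            rw [if_pos hc]; exact (hσ h u (hYD hu)).2
        · constructor
          · show (if σ h u ∈ Y then σ h u else _) ∈ Y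
            rw [if_neg hc]; exact (choD_spec G Y hYtot hu).1
          · show G.R u (if σ h u ∈ Y then σ h u else _)
            rw [if_neg hc]; exact (choD_spec G Y hYtot hu).2
      · intro ρ hplay hin h0 hcomp
        have hcomp2 : G.Compatible j σ ρ := by
          intro i hown
          have hval : σ (Hist ρ i) (ρ i) ∈ Y := by
            refine ⟨(hσ _ _ ((hin i).1)).1, ?_⟩
            exact compl_att_own (hin i).1 (hin i).2 hown (hσ _ _ ((hin i).1)).2
              (hσ _ _ ((hin i).1)).1
          rw [hcomp i hown]
          show (if σ (Hist ρ i) (ρ i) ∈ Y then _ else _) = _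
          rw [if_pos hval]
        exact hwin ρ hplay (fun i => (hin i).1) h0 hcomp2
    -- apply the induction hypothesis to Y
    have hYne : Y.Nonempty := Set.nonempty_iff_ne_empty.mpr hYe
    have hYss : Y ⊂ D := by
      obtain ⟨u, huD, huc⟩ := hTex
      have huT : u ∈ T := ⟨huD, huc⟩
      refine ⟨hYD, fun hsub => ?_⟩
      exact (hsub huD).2 (subset_att huT)
    have hYcard : Y.ncard < D.ncard := Set.ncard_lt_ncard hYss (Set.toFinite D)
    obtain ⟨t, htY, hcore⟩ := IH Y hYcard hYtot ⟨hYne.choose, hYne.choose_spec,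
      hYwins _ hYne.choose_spec⟩
    obtain ⟨τ, hτ, hτg⟩ := hcore
    -- choose winning strategies on Y for every state of Y
    have hWS' : ∀ w, ∃ σw, StratOn G Y σw ∧ (w ∈ Y →
        ∀ ρ, G.IsPlay ρ → (∀ i, ρ i ∈ Y) → ρ 0 = w → G.Compatible j σw ρ →
          InOmega j (G.colorSeq ρ)) := by
      intro w
      by_cases hw : w ∈ Y
      · obtain ⟨σw, h1, h2⟩ := hYwins w hw
        exact ⟨σw, h1, fun _ => h2⟩
      · exact ⟨fun _ u => choD G Y hYtot u,
          fun h u hu => ⟨(choD_spec G Y hYtot hu).1, (choD_spec G Y hYtot hu).2⟩,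
          fun h => absurd h hw⟩
    choose WS hWS using hWS'
    -- the combined strategy
    set σs : List S → S → S := fun h u =>
      if u ∈ Y then
        (if stemY Y h = [] then τ h u
         else WS ((runY Y h).headD u) (runY Y h) u)
      else if u ∈ A ∧ u ∉ T ∧ G.owner u = j then amov u
      else choD G D hDtot u with hσsdef
    have hevτ : ∀ h u, u ∈ Y → stemY Y h = [] → σs h u = τ h u := by
      intro h u h1 h2
      show (if u ∈ Y then (if stemY Y h = [] then τ h u
        else WS ((runY Y h).headD u) (runY Y h) u)
        else if u ∈ A ∧ u ∉ T ∧ G.owner u = j then amov u else choD G D hDtot u) = τ h u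
      rw [if_pos h1, if_pos h2]
    have hevW : ∀ h u, u ∈ Y → stemY Y h ≠ [] →
        σs h u = WS ((runY Y h).headD u) (runY Y h) u := by
      intro h u h1 h2
      show (if u ∈ Y then (if stemY Y h = [] then τ h u
        else WS ((runY Y h).headD u) (runY Y h) u)
        else if u ∈ A ∧ u ∉ T ∧ G.owner u = j then amov u else choD G D hDtot u) = _
      rw [if_pos h1, if_neg h2]
    have hevA : ∀ h u, u ∉ Y → u ∈ A → u ∉ T → G.owner u = j → σs h u = amov u := by
      intro h u h1 h2 h3 h4
      show (if u ∈ Y then (if stemY Y h = [] then τ h u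
        else WS ((runY Y h).headD u) (runY Y h) u)
        else if u ∈ A ∧ u ∉ T ∧ G.owner u = j then amov u else choD G D hDtot u) = _
      rw [if_neg h1, if_pos ⟨h2, h3, h4⟩]
    have hσs : StratOn G D σs := by
      intro h u hu
      by_cases hY1 : u ∈ Y
      · by_cases hst : stemY Y h = []
        · rw [hevτ h u hY1 hst]
          exact ⟨hYD (hτ h u hY1).1, (hτ h u hY1).2⟩
        · rw [hevW h u hY1 hst]
          exact ⟨hYD ((hWS _).1 _ u hY1).1, ((hWS _).1 _ u hY1).2⟩
      · by_cases hc : u ∈ A ∧ u ∉ T ∧ G.owner u = j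
        · rw [hevA h u hY1 hc.1 hc.2.1 hc.2.2]
          exact ⟨(hamov u hc.1 hc.2.1 hc.2.2).2.1, (hamov u hc.1 hc.2.1 hc.2.2).1⟩
        · have hev : σs h u = choD G D hDtot u := by
            show (if u ∈ Y then (if stemY Y h = [] then τ h u
              else WS ((runY Y h).headD u) (runY Y h) u)
              else if u ∈ A ∧ u ∉ T ∧ G.owner u = j then amov u else choD G D hDtot u) = _
            rw [if_neg hY1, if_neg hc]
          rw [hev]
          exact ⟨(choD_spec G D hDtot hu).1, (choD_spec G D hDtot hu).2⟩
    refine ⟨t, hYD htY, σs, hσs, ?_⟩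
    intro ρ hplay hin h0 hcomp
    have hmv : ∀ i, ρ i ∈ A → ρ i ∉ T → G.owner (ρ i) = j →
        ρ (i + 1) = amov (ρ i) := by
      intro i h1 h2 h3
      have hnotY : ρ i ∉ Y := fun hY' => hY'.2 h1
      rw [hcomp i h3]
      exact hevA _ _ hnotY h1 h2 h3
    by_cases hinf : ∀ p, ∃ q, p < q ∧ ρ q ∈ T
    · exact hcutT ρ hin hinf
    push_neg at hinf
    obtain ⟨p₀, hp₀⟩ := hinf
    have hstay : ∀ i, p₀ < i → ρ i ∈ Y := by
      intro i hi
      by_contra hniY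
      have hiA : ρ i ∈ A := by
        by_contra hiA
        exact hniY ⟨hin i, hiA⟩
      obtain ⟨q, hq, hqT⟩ := hreach ρ hplay hin hmv i hiA
      exact hp₀ q (by omega) hqT
    by_cases hallY : ∀ i, ρ i ∈ Y
    · -- the play never leaves Y : it is compatible with the core strategy τ
      have hcompτ : G.Compatible j τ ρ := by
        intro i hown
        rw [hcomp i hown]
        exact hevτ _ _ (hallY i) (run_stem_hist_all fun k _ => hallY k).2
      exact hτg ρ hplay hallY h0 hcompτ
    · push_neg at hallY
      obtain ⟨i₀, hi₀⟩ := hallY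
      have hi₀p : i₀ ≤ p₀ := by
        by_contra hcon
        exact hi₀ (hstay i₀ (by omega))
      set q := Nat.findGreatest (fun i => ρ i ∉ Y) p₀ with hqdef
      have hqspec : ρ q ∉ Y := Nat.findGreatest_spec (P := fun i => ρ i ∉ Y) hi₀p hi₀
      have hgt : ∀ k, q < k → ρ k ∈ Y := by
        intro k hk
        rcases le_or_gt k p₀ with h | h
        · by_contra hky
          exact Nat.findGreatest_is_greatest (P := fun i => ρ i ∉ Y) hk h hky
        · exact hstay k h
      have hq1 : 1 ≤ q := by
        rcases Nat.eq_zero_or_pos q with h | h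
        · rw [h] at hqspec
          rw [h0] at hqspec
          exact absurd htY hqspec
        · omega
      have hqA : ρ q ∈ A := by
        by_contra hc
        exact hqspec ⟨hin q, hc⟩
      have hqT : ρ q ∈ T := by
        obtain ⟨q', hq', hq'T⟩ := hreach ρ hplay hin hmv q hqA
        rcases eq_or_lt_of_le hq' with h | h
        · exact h ▸ hq'T
        · exact absurd (subset_att hq'T) (hgt q' h).2
      -- the tail after position q stays in Y and follows WS (ρ (q+1))
      set w := ρ (q + 1) with hwdef
      set ρt : ℕ → S := fun k => ρ (q + 1 + k) with hρtdef
      have hρtY : ∀ k, ρt k ∈ Y := fun k => hgt _ (by omega)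
      have hwY : w ∈ Y := hρtY 0
      have hρtplay : G.IsPlay ρt := by
        intro k
        show G.R (ρ (q + 1 + k)) (ρ (q + 1 + (k + 1)))
        rw [show q + 1 + (k + 1) = (q + 1 + k) + 1 by omega]
        exact hplay (q + 1 + k)
      have hsplit : ∀ k, runY Y (Hist ρ (q + 1 + k)) = Hist ρt k ∧
          stemY Y (Hist ρ (q + 1 + k)) = Hist ρ (q + 1) := by
        intro k
        have h5 := run_stem_hist (Y := Y) (ρ := ρ) (q := q) (i := q + 1 + k)
          (by omega) hqspec (fun m hm1 _ => hgt m hm1)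
        constructor
        · rw [h5.1]
          have h7 : q + 1 + k - (q + 1) = k := by omega
          rw [h7]
        · exact h5.2
      have hstemne : stemY Y (Hist ρ (q + 1 + 0)) ≠ [] := by
        rw [(hsplit 0).2, hist_succ]
        simp
      have hstemne' : ∀ k, stemY Y (Hist ρ (q + 1 + k)) ≠ [] := by
        intro k
        rw [(hsplit k).2, hist_succ]
        simp
      have hheadD : ∀ k, (Hist ρt k).headD (ρ (q + 1 + k)) = w := by
        intro k
        cases k with
        | zero => rfl
        | succ k =>
          rw [Hist, List.ofFn_succ]
          rfl
      have hcompt : G.Compatible j (WS w) ρt := by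
        intro k hown
        have h2 := hcomp (q + 1 + k) hown
        show ρ (q + 1 + k + 1) = WS w (Hist ρt k) (ρt k)
        rw [h2]
        have h8 := hevW (Hist ρ (q + 1 + k)) (ρ (q + 1 + k)) (hρtY k) (hstemne' k)
        rw [(hsplit k).1, hheadD k] at h8
        exact h8
      have hΩt := (hWS w).2 hwY ρt hρtplay hρtY rfl hcompt
      obtain ⟨m, N, hmpar, hminf, hmbd⟩ := inOmega_extract hΩt
      have hocc : ∀ n, ∃ i2, n < i2 ∧ (N ≤ i2 ∧ G.colorSeq ρt i2 = m) := by
        intro n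
        obtain ⟨i2, hi2, hce⟩ := hminf (max n N + 1)
        exact ⟨i2, by omega, by omega, hce⟩
      obtain ⟨g, hg0, hgstep⟩ := mkIdx hocc
      refine ⟨fun ℓ => match ℓ with | 0 => 0 | (ℓ' + 1) => q + 1 + g (ℓ' + 1), rfl, ?_⟩
      intro ℓ
      cases ℓ with
      | zero =>
        show G.SegDom j ρ 0 (q + 1 + g 1)
        exact segDom_of_maxwit (w := q) (by omega) (by omega) (by omega) hqT.2
          (fun k _ _ => hbound _ (hin k)) hpar
      | succ ℓ =>
        show G.SegDom j ρ (q + 1 + g (ℓ + 1)) (q + 1 + g (ℓ + 2))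
        have hg1 : g (ℓ + 1) < g (ℓ + 2) := (hgstep (ℓ + 1)).1
        have hgN : N ≤ g (ℓ + 1) := (hgstep ℓ).2.1
        have hstep1 := hgstep (ℓ + 1)
        refine segDom_of_maxwit (w := q + 1 + g (ℓ + 2)) (by omega) (by omega) le_rfl
          ?_ ?_ hmpar
        · exact hstep1.2.2
        intro k hk1 hk2
        have hkk : q + 1 + (k - (q + 1)) = k := by omega
        have h6 := hmbd (k - (q + 1)) (by omega)
        show G.c (ρ k) ≤ m
        have h7 : G.colorSeq ρt (k - (q + 1)) = G.c (ρ k) := by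
          show G.c (ρ (q + 1 + (k - (q + 1)))) = G.c (ρ k)
          rw [hkk]
        rw [← h7]
        exact h6

/-! ### main lemma, case: top color has the opponent's parity -/

theorem bad_case [Fintype S] {G : ParityGame S} {j : Fin 2} {D : Set S} {d : ℕ}
    (hDtot : ∀ s ∈ D, ∃ t ∈ D, G.R s t)
    (hne : D.Nonempty)
    (hall : ∀ s ∈ D, WinsOn G j D s)
    (hbound : ∀ u ∈ D, G.c u ≤ d)
    (hTex : ∃ u ∈ D, G.c u = d)
    (hpar : d % 2 ≠ (j : ℕ))
    (IH : ∀ E : Set S, E.ncard < D.ncard → (∀ s ∈ E, ∃ t ∈ E, G.R s t) →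
      (∃ s ∈ E, WinsOn G j E s) → ∃ t ∈ E, CoreOn G j E t) :
    ∃ t ∈ D, CoreOn G j D t := by
  classical
  set P : S → Prop := fun s => G.owner s ≠ j with hPdef
  set T : Set S := {u | u ∈ D ∧ G.c u = d} with hTdef
  set A : Set S := Att G P D T with hAdef
  have hTD : T ⊆ D := fun u hu => hu.1
  have hAD : A ⊆ D := att_subset_D hTD
  set Y : Set S := D \ A with hYdef
  have hYD : Y ⊆ D := Set.diff_subset
  have hbmov' : ∀ u, ∃ v, u ∈ A → u ∉ T → P u →
      G.R u v ∧ v ∈ D ∧ v ∈ A ∧ rankA G P D T v < rankA G P D T u := by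
    intro u
    by_cases hu : u ∈ A ∧ u ∉ T ∧ P u
    · obtain ⟨v, h1, h2, h3, h4⟩ := rankA_own hu.1 hu.2.1 hu.2.2
      exact ⟨v, fun _ _ _ => ⟨h1, h2, h3, h4⟩⟩
    · exact ⟨u, fun h1 h2 h3 => absurd ⟨h1, h2, h3⟩ hu⟩
  choose bmov hbmov using hbmov'
  have hYtot : ∀ u ∈ Y, ∃ v ∈ Y, G.R u v := by
    intro u hu
    by_cases hown : G.owner u = j
    · obtain ⟨v, hR, hvD, hvA⟩ := compl_att_opp hu.1 hu.2 (fun hc => hc hown)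
      exact ⟨v, ⟨hvD, hvA⟩, hR⟩
    · obtain ⟨v, hvD, hR⟩ := hDtot u hu.1
      exact ⟨v, ⟨hvD, compl_att_own hu.1 hu.2 hown hR hvD⟩, hR⟩
  -- Step 1: some state of Y wins the restricted game on Y
  have hspoiler : ∃ y ∈ Y, WinsOn G j Y y := by
    by_contra hno
    push_neg at hno
    obtain ⟨s₀, hs₀⟩ := hne
    obtain ⟨σ, hσ, hwin⟩ := hall s₀ hs₀
    -- a spoiling play on Y against the strategy induced by σ after history h₀
    have hbad' : ∀ (h₀ : List S) (w : S), ∃ β : ℕ → S, w ∈ Y →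
        G.IsPlay β ∧ (∀ i, β i ∈ Y) ∧ β 0 = w ∧
        (∀ k, G.owner (β k) = j → β (k + 1) =
          (if σ (h₀ ++ Hist β k) (β k) ∈ Y then σ (h₀ ++ Hist β k) (β k)
           else choD G Y hYtot (β k))) ∧
        ¬ InOmega j (G.colorSeq β) := by
      intro h₀ w
      by_cases hw : w ∈ Y
      · set θ : List S → S → S := fun k u =>
          if σ (h₀ ++ k) u ∈ Y then σ (h₀ ++ k) u else choD G Y hYtot u with hθdef
        have hθs : StratOn G Y θ := by
          intro k u hu
          by_cases hc : σ (h₀ ++ k) u ∈ Y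
          · constructor
            · show (if σ (h₀ ++ k) u ∈ Y then σ (h₀ ++ k) u else choD G Y hYtot u) ∈ Y
              rw [if_pos hc]; exact hc
            · show G.R u (if σ (h₀ ++ k) u ∈ Y then σ (h₀ ++ k) u else choD G Y hYtot u)
              rw [if_pos hc]; exact (hσ (h₀ ++ k) u (hYD hu)).2
          · constructor
            · show (if σ (h₀ ++ k) u ∈ Y then σ (h₀ ++ k) u else choD G Y hYtot u) ∈ Y
              rw [if_neg hc]; exact (choD_spec G Y hYtot hu).1
            · show G.R u (if σ (h₀ ++ k) u ∈ Y then σ (h₀ ++ k) u else choD G Y hYtot u)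
              rw [if_neg hc]; exact (choD_spec G Y hYtot hu).2
        have h3 : ¬ ∀ ρ, G.IsPlay ρ → (∀ i, ρ i ∈ Y) → ρ 0 = w → G.Compatible j θ ρ →
            InOmega j (G.colorSeq ρ) := fun hcon => hno w hw ⟨θ, hθs, hcon⟩
        push_neg at h3
        obtain ⟨β, hb1, hb2, hb3, hb4, hb5⟩ := h3
        refine ⟨β, fun _ => ⟨hb1, hb2, hb3, ?_, hb5⟩⟩
        intro k hk
        exact hb4 k hk
      · exact ⟨fun _ => w, fun h => absurd h hw⟩
    choose bad hbad using hbad'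
    -- the spoiling play in the full game
    set F : List S → S → S := fun h u =>
      (if G.owner u = j then σ h u
        else if u ∈ Y then
          (if bad (stemY Y h) ((runY Y h).headD u) ((runY Y h).length + 1) ∈ D ∧
              G.R u (bad (stemY Y h) ((runY Y h).headD u) ((runY Y h).length + 1))
           then bad (stemY Y h) ((runY Y h).headD u) ((runY Y h).length + 1)
           else choD G D hDtot u)
        else if u ∈ A ∧ u ∉ T then bmov u
        else choD G D hDtot u) with hFdef
    have hevj : ∀ h u, G.owner u = j → F h u = σ h u := by
      intro h u h1
      show (if G.owner u = j then σ h u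
        else if u ∈ Y then
          (if bad (stemY Y h) ((runY Y h).headD u) ((runY Y h).length + 1) ∈ D ∧
              G.R u (bad (stemY Y h) ((runY Y h).headD u) ((runY Y h).length + 1))
           then bad (stemY Y h) ((runY Y h).headD u) ((runY Y h).length + 1)
           else choD G D hDtot u)
        else if u ∈ A ∧ u ∉ T then bmov u
        else choD G D hDtot u) = σ h u
      rw [if_pos h1]
    have hevO : ∀ h u, G.owner u ≠ j → u ∈ Y → F h u =
        (if bad (stemY Y h) ((runY Y h).headD u) ((runY Y h).length + 1) ∈ D ∧
            G.R u (bad (stemY Y h) ((runY Y h).headD u) ((runY Y h).length + 1))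
         then bad (stemY Y h) ((runY Y h).headD u) ((runY Y h).length + 1)
         else choD G D hDtot u) := by
      intro h u h1 h2
      show (if G.owner u = j then σ h u
        else if u ∈ Y then
          (if bad (stemY Y h) ((runY Y h).headD u) ((runY Y h).length + 1) ∈ D ∧
              G.R u (bad (stemY Y h) ((runY Y h).headD u) ((runY Y h).length + 1))
           then bad (stemY Y h) ((runY Y h).headD u) ((runY Y h).length + 1)
           else choD G D hDtot u)
        else if u ∈ A ∧ u ∉ T then bmov u
        else choD G D hDtot u) = _
      rw [if_neg h1, if_pos h2]
    have hevB : ∀ h u, G.owner u ≠ j → u ∉ Y → u ∈ A → u ∉ T → F h u = bmov u := by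
      intro h u h1 h2 h3 h4
      show (if G.owner u = j then σ h u
        else if u ∈ Y then
          (if bad (stemY Y h) ((runY Y h).headD u) ((runY Y h).length + 1) ∈ D ∧
              G.R u (bad (stemY Y h) ((runY Y h).headD u) ((runY Y h).length + 1))
           then bad (stemY Y h) ((runY Y h).headD u) ((runY Y h).length + 1)
           else choD G D hDtot u)
        else if u ∈ A ∧ u ∉ T then bmov u
        else choD G D hDtot u) = bmov u
      rw [if_neg h1, if_neg h2, if_pos ⟨h3, h4⟩]
    have hFs : StratOn G D F := by
      intro h u hu
      by_cases h1 : G.owner u = j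
      · rw [hevj h u h1]
        exact ⟨(hσ h u hu).1, (hσ h u hu).2⟩
      · by_cases h2 : u ∈ Y
        · rw [hevO h u h1 h2]
          by_cases h3 : bad (stemY Y h) ((runY Y h).headD u) ((runY Y h).length + 1) ∈ D ∧
              G.R u (bad (stemY Y h) ((runY Y h).headD u) ((runY Y h).length + 1))
          · rw [if_pos h3]
            exact ⟨h3.1, h3.2⟩
          · rw [if_neg h3]
            exact ⟨(choD_spec G D hDtot hu).1, (choD_spec G D hDtot hu).2⟩
        · by_cases h3 : u ∈ A ∧ u ∉ T
          · rw [hevB h u h1 h2 h3.1 h3.2]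
            exact ⟨(hbmov u h3.1 h3.2 h1).2.1, (hbmov u h3.1 h3.2 h1).1⟩
          · have hev : F h u = choD G D hDtot u := by
              show (if G.owner u = j then σ h u
        else if u ∈ Y then
          (if bad (stemY Y h) ((runY Y h).headD u) ((runY Y h).length + 1) ∈ D ∧
              G.R u (bad (stemY Y h) ((runY Y h).headD u) ((runY Y h).length + 1))
           then bad (stemY Y h) ((runY Y h).headD u) ((runY Y h).length + 1)
           else choD G D hDtot u)
        else if u ∈ A ∧ u ∉ T then bmov u
        else choD G D hDtot u) = _
              rw [if_neg h1, if_neg h2, if_neg h3]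
            rw [hev]
            exact ⟨(choD_spec G D hDtot hu).1, (choD_spec G D hDtot hu).2⟩
    set ρ : ℕ → S := bPlay F s₀ with hρdef
    have hρ0 : ρ 0 = s₀ := rfl
    have hρsucc : ∀ i, ρ (i + 1) = F (Hist ρ i) (ρ i) := fun i => bPlay_succ F s₀ i
    have hinD : ∀ i, ρ i ∈ D := by
      intro i
      induction i with
      | zero => exact hs₀
      | succ i ih =>
        rw [hρsucc i]
        exact (hFs _ _ ih).1
    have hplay : G.IsPlay ρ := by
      intro i
      rw [hρsucc i]
      exact (hFs _ _ (hinD i)).2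
    have hcompσ : G.Compatible j σ ρ := by
      intro i hown
      rw [hρsucc i]
      exact hevj _ _ hown
    have hmv : ∀ i, ρ i ∈ A → ρ i ∉ T →
        ρ (i + 1) ∈ A ∧ rankA G P D T (ρ (i + 1)) < rankA G P D T (ρ i) := by
      intro i h1 h2
      by_cases hown : G.owner (ρ i) = j
      · exact rankA_opp h1 h2 (fun hc => hc hown) (hplay i) (hinD (i + 1))
      · have hnY : ρ i ∉ Y := fun hY' => hY'.2 h1
        have h5 : ρ (i + 1) = bmov (ρ i) := by
          rw [hρsucc i]
          exact hevB _ _ hown hnY h1 h2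
        rw [h5]
        exact ⟨(hbmov _ h1 h2 hown).2.2.1, (hbmov _ h1 h2 hown).2.2.2⟩
    have hreach : ∀ p, ρ p ∈ A → ∃ q, p ≤ q ∧ ρ q ∈ T := by
      intro p hp
      exact att_descent hp (fun i _ hiA hiT => hmv i hiA hiT)
    -- the conclusion from an all-Y tail starting at n
    have hfinish : ∀ n, (∀ k, ρ (n + k) ∈ Y) →
        (∀ k, runY Y (Hist ρ (n + k)) = Hist (fun m => ρ (n + m)) k ∧
          stemY Y (Hist ρ (n + k)) = Hist ρ n) → False := by
      intro n hY hrs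
      obtain ⟨hbp, hbY, hb0, hbc, hbΩ⟩ := hbad (Hist ρ n) (ρ n) (hY 0)
      have halign : ∀ k, ρ (n + k) = bad (Hist ρ n) (ρ n) k := by
        intro k
        induction k using Nat.strong_induction_on with
        | _ k ih =>
          match k with
          | 0 => exact hb0.symm
          | (k + 1) =>
            have hhist : Hist (fun m => ρ (n + m)) k = Hist (bad (Hist ρ n) (ρ n)) k :=
              hist_congr fun m hm => ih m (by omega)
            have hheadD : (Hist (fun m => ρ (n + m)) k).headD (ρ (n + k)) = ρ n := by
              cases k with
              | zero => rfl
              | succ k' =>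
                rw [Hist, List.ofFn_succ]
                rfl
            by_cases hown : G.owner (ρ (n + k)) = j
            · have h2 : ρ (n + k + 1) = σ (Hist ρ (n + k)) (ρ (n + k)) := hcompσ (n + k) hown
              have hown' : G.owner (bad (Hist ρ n) (ρ n) k) = j := by
                rw [← ih k (by omega)]; exact hown
              have h3 := hbc k hown'
              have h4 : Hist ρ n ++ Hist (bad (Hist ρ n) (ρ n)) k = Hist ρ (n + k) := by
                rw [← hhist, ← hist_add]
              show ρ (n + k + 1) = _
              rw [h3, h4, ← ih k (by omega)]
              have h5 : σ (Hist ρ (n + k)) (ρ (n + k)) ∈ Y := by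
                rw [← h2]; exact hY (k + 1)
              rw [if_pos h5, ← h2]
            · have h2 : ρ (n + k + 1) = F (Hist ρ (n + k)) (ρ (n + k)) := hρsucc (n + k)
              have h6 := hevO (Hist ρ (n + k)) (ρ (n + k)) hown (hY k)
              rw [(hrs k).1, (hrs k).2, hheadD] at h6
              have hlen : (Hist (fun m => ρ (n + m)) k).length = k := by
                rw [Hist, List.length_ofFn]
              rw [hlen] at h6
              have hguard : bad (Hist ρ n) (ρ n) (k + 1) ∈ D ∧
                  G.R (ρ (n + k)) (bad (Hist ρ n) (ρ n) (k + 1)) := by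
                constructor
                · exact hYD (hbY (k + 1))
                · rw [ih k (by omega)]
                  exact hbp k
              rw [if_pos hguard] at h6
              show ρ (n + k + 1) = _
              rw [h2, h6]
      have hΩ := hwin ρ hplay hinD rfl hcompσ
      have hsh := inOmega_shift n hΩ
      apply hbΩ
      convert hsh using 1
      funext k
      show G.c (bad (Hist ρ n) (ρ n) k) = G.c (ρ (n + k))
      rw [halign k]
    by_cases hinfT : ∀ p, ∃ q, p < q ∧ ρ q ∈ T
    · have hio : InfOften (G.colorSeq ρ) d := by
        intro p
        obtain ⟨q, hq1, hq2⟩ := hinfT p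
        exact ⟨q, by omega, hq2.2⟩
      exact absurd (hwin ρ hplay hinD rfl hcompσ)
        (not_inOmega_of_maxinf (fun i => hbound _ (hinD i)) hio hpar)
    · push_neg at hinfT
      obtain ⟨p₀, hp₀⟩ := hinfT
      have hstay : ∀ i, p₀ < i → ρ i ∈ Y := by
        intro i hi
        by_contra hniY
        have hiA : ρ i ∈ A := by
          by_contra hiA
          exact hniY ⟨hinD i, hiA⟩
        obtain ⟨q, hq, hqT⟩ := hreach i hiA
        exact hp₀ q (by omega) hqT
      by_cases hallY : ∀ i, ρ i ∈ Y
      · refine hfinish 0 (fun k => hallY (0 + k)) ?_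
        intro k
        have h5 := run_stem_hist_all (Y := Y) (ρ := ρ) (i := 0 + k)
          (fun m _ => hallY m)
        refine ⟨?_, ?_⟩
        · rw [h5.1]
          have h7 : (0 : ℕ) + k = k := Nat.zero_add k
          rw [h7]
          exact hist_congr fun m hm => by rw [Nat.zero_add]
        · rw [h5.2]
          rfl
      · push_neg at hallY
        obtain ⟨i₀, hi₀⟩ := hallY
        have hi₀p : i₀ ≤ p₀ := by
          by_contra hcon
          exact hi₀ (hstay i₀ (by omega))
        set q := Nat.findGreatest (fun i => ρ i ∉ Y) p₀ with hqdef
        have hqspec : ρ q ∉ Y := Nat.findGreatest_spec (P := fun i => ρ i ∉ Y) hi₀p hi₀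
        have hgt : ∀ k, q < k → ρ k ∈ Y := by
          intro k hk
          rcases le_or_gt k p₀ with h | h
          · by_contra hky
            exact Nat.findGreatest_is_greatest (P := fun i => ρ i ∉ Y) hk h hky
          · exact hstay k h
        refine hfinish (q + 1) (fun k => hgt (q + 1 + k) (by omega)) ?_
        intro k
        have h5 := run_stem_hist (Y := Y) (ρ := ρ) (q := q) (i := q + 1 + k)
          (by omega) hqspec (fun m hm1 _ => hgt m hm1)
        constructor
        · rw [h5.1]
          have h7 : q + 1 + k - (q + 1) = k := by omega
          rw [h7]
        · exact h5.2
    -- end of hspoiler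
  obtain ⟨y0, hy0, hwy0⟩ := hspoiler
  have hYss : Y ⊂ D := by
    obtain ⟨u, huD, huc⟩ := hTex
    refine ⟨hYD, fun hsub => ?_⟩
    exact (hsub huD).2 (subset_att ⟨huD, huc⟩)
  have hYcard : Y.ncard < D.ncard := Set.ncard_lt_ncard hYss (Set.toFinite D)
  obtain ⟨t, htY, hcore⟩ := IH Y hYcard hYtot ⟨y0, hy0, hwy0⟩
  refine ⟨t, hYD htY, coreOn_mono hYD hDtot ?_ htY hcore⟩
  intro u hu hown v hR hvD
  exact ⟨hvD, compl_att_own hu.1 hu.2 hown hR hvD⟩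

/-! ### the key theorem, by induction on the size of the subgame -/

theorem keyRel [Fintype S] (G : ParityGame S) (j : Fin 2) :
    ∀ n (D : Set S), D.ncard ≤ n → (∀ s ∈ D, ∃ t ∈ D, G.R s t) →
      (∃ s ∈ D, WinsOn G j D s) → ∃ t ∈ D, CoreOn G j D t := by
  intro n
  induction n with
  | zero =>
    rintro D hc hDtot ⟨s, hs, -⟩
    have h0 : D.ncard = 0 := Nat.le_zero.mp hc
    have hD : D = ∅ := (Set.ncard_eq_zero (Set.toFinite D)).mp h0
    exact absurd (hD ▸ hs) (Set.notMem_empty s)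
  | succ n IHn =>
    rintro D hc hDtot ⟨s0, hs0, hw0⟩
    by_cases hDD : WinRegOn G j D = D
    · -- every state of D is winning : apply the case analysis on the top color
      have hall : ∀ s ∈ D, WinsOn G j D s := by
        intro s hs
        rw [← hDD] at hs
        exact hs.2
      have hne : D.Nonempty := ⟨s0, hs0⟩
      obtain ⟨u0, hu0, hmax⟩ := Set.exists_max_image D G.c (Set.toFinite D) hne
      have hIH : ∀ E : Set S, E.ncard < D.ncard → (∀ s ∈ E, ∃ t ∈ E, G.R s t) →
          (∃ s ∈ E, WinsOn G j E s) → ∃ t ∈ E, CoreOn G j E t :=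
        fun E hE hEtot hEex => IHn E (by omega) hEtot hEex
      by_cases hpar : G.c u0 % 2 = (j : ℕ)
      · exact good_case hDtot hne hall (fun u hu => hmax u hu) ⟨u0, hu0, rfl⟩ hpar hIH
      · exact bad_case hDtot hne hall (fun u hu => hmax u hu) ⟨u0, hu0, rfl⟩ hpar hIH
    · -- restrict to the (strictly smaller) winning region
      have hWs : WinRegOn G j D ⊆ D := fun u hu => hu.1
      have hss : WinRegOn G j D ⊂ D := ⟨hWs, fun hsub => hDD (le_antisymm hWs hsub)⟩
      have hWcard : (WinRegOn G j D).ncard < D.ncard :=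
        Set.ncard_lt_ncard hss (Set.toFinite D)
      obtain ⟨t, htW, hcore⟩ := IHn (WinRegOn G j D) (by omega) (winRegOn_tot hDtot)
        ⟨s0, ⟨hs0, hw0⟩, winsOn_winRegOn hDtot hs0 hw0⟩
      exact ⟨t, hWs htW, coreOn_mono hWs hDtot winRegOn_opp_closed htW hcore⟩

end PGW

/-- If the winning core `A_j(G)` of player `j` is empty, then the
winning region `W_j(G)` of player `j` is empty. -/
theorem winRegion_empty_of_winCore_empty {S : Type} [Fintype S] (G : ParityGame S)
    (j : Fin 2) (h : G.WinCore j = ∅) :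
    G.WinRegion j = ∅ := by
  classical
  rw [Set.eq_empty_iff_forall_notMem]
  intro s hs
  obtain ⟨σ, hσ, hwin⟩ := hs
  have hWins : PGW.WinsOn G j Set.univ s :=
    ⟨σ, fun h' u _ => ⟨trivial, hσ h' u⟩, fun ρ hp _ h0 hc => hwin ρ hp h0 hc⟩
  obtain ⟨t, -, τ, hτ, hg⟩ := PGW.keyRel G j (Set.ncard (Set.univ : Set S)) Set.univ
    le_rfl (fun s' _ => ⟨(G.total s').choose, trivial, (G.total s').choose_spec⟩)
    ⟨s, trivial, hWins⟩
  have htc : t ∈ G.WinCore j :=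
    ⟨τ, fun h' u => (hτ h' u trivial).2, fun ρ hp h0 hc => hg ρ hp (fun _ => trivial) h0 hc⟩
  rw [h] at htc
  exact htc
end

section
/- Let G be a parity game and j ∈ {0,1} a player. The winning core A_j(G) of player j is empty if and only if the winning region W_j(G) of player j is empty. -/
open ParityGame
section AuxLemmas

namespace ParityGame

private lemma fin2_one_sub_ne (j : Fin 2) : ((1 - j : Fin 2) : ℕ) ≠ (j : ℕ) := by
  fin_cases j <;> decide

private lemma mod_two_eq_one_sub {j : Fin 2} {n : ℕ} (h : n % 2 ≠ (j : ℕ)) :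
    n % 2 = ((1 - j : Fin 2) : ℕ) := by
  fin_cases j <;> simp_all <;> omega

/-- Bounded sequences have a largest value occurring infinitely often, and the
sequence is eventually bounded by it. -/
private lemma exists_max_infOften {π : ℕ → ℕ} {K : ℕ} (hK : ∀ i, π i ≤ K) :
    ∃ e, InfOften π e ∧ (∀ e', InfOften π e' → e' ≤ e) ∧ ∃ N, ∀ i, N ≤ i → π i ≤ e := by
  classical
  have hnb : ∀ v, ¬ InfOften π v → ∃ n, ∀ i, n ≤ i → π i ≠ v := by
    intro v hv
    unfold InfOften at hv
    push_neg at hv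
    exact hv
  have hex : ∃ v, v ≤ K ∧ InfOften π v := by
    by_contra hc
    push_neg at hc
    have h2 : ∀ v : Fin (K + 1), ∃ n, ∀ i, n ≤ i → π i ≠ (v : ℕ) :=
      fun v => hnb v (hc v (Nat.lt_succ_iff.mp v.isLt))
    choose f hf using h2
    have h3 : f ⟨π (Finset.univ.sup f), Nat.lt_succ_iff.mpr (hK _)⟩ ≤ Finset.univ.sup f :=
      Finset.le_sup (Finset.mem_univ _)
    exact hf ⟨π (Finset.univ.sup f), Nat.lt_succ_iff.mpr (hK _)⟩ (Finset.univ.sup f) h3 rfl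
  obtain ⟨v0, hv0K, hv0⟩ := hex
  classical
  set F : Finset ℕ := (Finset.range (K + 1)).filter (fun v => InfOften π v) with hF
  have hv0F : v0 ∈ F := by
    rw [hF, Finset.mem_filter, Finset.mem_range]
    exact ⟨Nat.lt_succ_iff.mpr hv0K, hv0⟩
  have heF : F.max' ⟨v0, hv0F⟩ ∈ F := F.max'_mem _
  set e := F.max' ⟨v0, hv0F⟩ with he
  have heIO : InfOften π e := (Finset.mem_filter.mp heF).2
  have hmax : ∀ e', InfOften π e' → e' ≤ e := by
    intro e' h'
    obtain ⟨i, _, hi⟩ := h' 0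
    refine F.le_max' _ ?_
    rw [hF, Finset.mem_filter, Finset.mem_range]
    exact ⟨Nat.lt_succ_iff.mpr (hi ▸ hK i), h'⟩
  refine ⟨e, heIO, hmax, ?_⟩
  have h2 : ∀ v : Fin (K + 1), ∃ n, e < (v : ℕ) → ∀ i, n ≤ i → π i ≠ (v : ℕ) := by
    intro v
    by_cases h : e < (v : ℕ)
    · have hni : ¬ InfOften π (v : ℕ) := fun h' => absurd (hmax _ h') (not_le.mpr h)
      obtain ⟨n, hn⟩ := hnb _ hni
      exact ⟨n, fun _ => hn⟩
    · exact ⟨0, fun h' => absurd h' h⟩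
  choose f hf using h2
  refine ⟨Finset.univ.sup f, fun i hi => ?_⟩
  by_contra hcon
  push_neg at hcon
  exact hf ⟨π i, Nat.lt_succ_iff.mpr (hK i)⟩ hcon i
    (le_trans (Finset.le_sup (Finset.mem_univ _)) hi) rfl

private lemma inOmega_tail {j : Fin 2} {π : ℕ → ℕ} (n : ℕ) (h : InOmega j π) :
    InOmega j (fun i => π (n + i)) := by
  obtain ⟨⟨K, hK⟩, e, he, hmax, hpar⟩ := h
  refine ⟨⟨K, fun i => hK _⟩, e, ?_, ?_, hpar⟩
  · intro m
    obtain ⟨i, hi, hie⟩ := he (n + m)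
    refine ⟨i - n, by omega, ?_⟩
    show π (n + (i - n)) = e
    rwa [show n + (i - n) = i by omega]
  · intro e' h'
    apply hmax
    intro m
    obtain ⟨i, _, hie⟩ := h' m
    exact ⟨n + i, by omega, hie⟩

private lemma inOmega_not_both {j : Fin 2} {π : ℕ → ℕ} (h : InOmega j π)
    (h' : InOmega (1 - j) π) : False := by
  obtain ⟨_, e, he, hmax, hp⟩ := h
  obtain ⟨_, e', he', hmax', hp'⟩ := h'
  have hee : e = e' := le_antisymm (hmax' e he) (hmax e' he')
  rw [hee] at hp
  exact fin2_one_sub_ne j (hp'.symm.trans hp)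

/-- If a bounded sequence can be chopped (from position 0) into infinitely many
consecutive `j`-dominating segments, then it is in `Ω_j`. -/
private lemma inOmega_of_chops {j : Fin 2} {π : ℕ → ℕ} {K : ℕ} (hK : ∀ i, π i ≤ K)
    (idx : ℕ → ℕ) (h0 : idx 0 = 0)
    (hseg : ∀ ℓ, idx ℓ < idx (ℓ + 1) ∧
      ((Finset.Icc (idx ℓ + 1) (idx (ℓ + 1))).sup π) % 2 = (j : ℕ)) :
    InOmega j π := by
  classical
  obtain ⟨e, he, hmax, N, hN⟩ := exists_max_infOften hK
  refine ⟨⟨K, hK⟩, e, he, hmax, ?_⟩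
  have hmono : ∀ a b, a ≤ b → idx a ≤ idx b := by
    intro a b hab
    induction b with
    | zero => simp [show a = 0 by omega]
    | succ b ih =>
      rcases Nat.lt_or_ge a (b + 1) with h | h
      · exact le_trans (ih (by omega)) (le_of_lt (hseg b).1)
      · simp [show a = b + 1 by omega]
  have hself : ∀ n, n ≤ idx n := by
    intro n
    induction n with
    | zero => exact Nat.zero_le _
    | succ n ih => have := (hseg n).1; omega
  obtain ⟨p, hp, hpe⟩ := he (idx N + 1)
  have hexl : ∃ ℓ, p ≤ idx ℓ := ⟨p, hself p⟩
  have hL1 : p ≤ idx (Nat.find hexl) := Nat.find_spec hexl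
  have hLpos : Nat.find hexl ≠ 0 := by
    intro h
    rw [h, h0] at hL1
    omega
  obtain ⟨ℓ, hLeq⟩ : ∃ ℓ, Nat.find hexl = ℓ + 1 := ⟨Nat.find hexl - 1, by omega⟩
  rw [hLeq] at hL1
  have hL2 : idx ℓ < p := by
    have := Nat.find_min hexl (m := ℓ) (by omega)
    omega
  have hNl : N ≤ ℓ := by
    by_contra hcon
    push_neg at hcon
    have : idx (ℓ + 1) ≤ idx N := hmono _ _ (by omega)
    omega
  have hsup := (hseg ℓ).2
  have hsupe : (Finset.Icc (idx ℓ + 1) (idx (ℓ + 1))).sup π = e := by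
    apply le_antisymm
    · apply Finset.sup_le
      intro k hk
      rw [Finset.mem_Icc] at hk
      apply hN
      have h1 := hself ℓ
      omega
    · calc e = π p := hpe.symm
        _ ≤ _ := Finset.le_sup (Finset.mem_Icc.mpr ⟨by omega, hL1⟩)
  rwa [hsupe] at hsup

/-- If a bounded sequence is in `Ω_j` but cannot be chopped into infinitely many
consecutive `j`-dominating segments, then its largest non-initial value is
attained and has parity `1 - j`. -/
private lemma exists_bad_max {j : Fin 2} {π : ℕ → ℕ} {K : ℕ} (hK : ∀ i, π i ≤ K)
    (hΩ : InOmega j π)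
    (hnot : ¬ ∃ idx : ℕ → ℕ, idx 0 = 0 ∧ ∀ ℓ, idx ℓ < idx (ℓ + 1) ∧
      ((Finset.Icc (idx ℓ + 1) (idx (ℓ + 1))).sup π) % 2 = (j : ℕ)) :
    ∃ q, 1 ≤ q ∧ (∀ k, 1 ≤ k → π k ≤ π q) ∧ π q % 2 = ((1 - j : Fin 2) : ℕ) := by
  classical
  have hM : ∃ q, 1 ≤ q ∧ ∀ k, 1 ≤ k → π k ≤ π q := by
    set F : Finset ℕ := (Finset.range (K + 1)).filter (fun v => ∃ k, 1 ≤ k ∧ π k = v) with hF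
    have h1 : π 1 ∈ F := by
      rw [hF, Finset.mem_filter, Finset.mem_range]
      exact ⟨Nat.lt_succ_iff.mpr (hK 1), 1, le_refl 1, rfl⟩
    have hmem := F.max'_mem ⟨_, h1⟩
    obtain ⟨q, hq1, hq2⟩ := (Finset.mem_filter.mp hmem).2
    refine ⟨q, hq1, fun k hk => ?_⟩
    rw [hq2]
    refine F.le_max' _ ?_
    rw [hF, Finset.mem_filter, Finset.mem_range]
    exact ⟨Nat.lt_succ_iff.mpr (hK k), k, hk, rfl⟩
  obtain ⟨q, hq1, hqmax⟩ := hM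
  refine ⟨q, hq1, hqmax, ?_⟩
  by_contra hc
  have hj : π q % 2 = (j : ℕ) := by
    fin_cases j <;> simp_all <;> omega
  apply hnot
  obtain ⟨e, he, hmax, N, hN⟩ := exists_max_infOften hK
  have hepar : e % 2 = (j : ℕ) := by
    obtain ⟨_, e', he', hmax', hp'⟩ := hΩ
    have : e = e' := le_antisymm (hmax' e he) (hmax e' he')
    rwa [this]
  have hA1 : 1 ≤ max N q := le_trans hq1 (le_max_right _ _)
  have hstep : ∀ a, ∃ b, N ≤ a →
      (a < b ∧ ((Finset.Icc (a + 1) b).sup π) % 2 = (j : ℕ)) := by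
    intro a
    by_cases h : N ≤ a
    · obtain ⟨p, hp, hpe⟩ := he (a + 1)
      refine ⟨p, fun _ => ⟨by omega, ?_⟩⟩
      have hsupe : (Finset.Icc (a + 1) p).sup π = e := by
        apply le_antisymm
        · exact Finset.sup_le fun k hk => hN k (by rw [Finset.mem_Icc] at hk; omega)
        · calc e = π p := hpe.symm
            _ ≤ _ := Finset.le_sup (Finset.mem_Icc.mpr ⟨hp, le_refl p⟩)
      rw [hsupe]
      exact hepar
    · exact ⟨a + 1, fun h' => absurd h' h⟩
  choose g hg using hstep
  obtain ⟨idx, hidx0, hidx1, hidxs⟩ : ∃ idx : ℕ → ℕ, idx 0 = 0 ∧ idx 1 = max N q ∧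
      ∀ n, idx (n + 2) = g (idx (n + 1)) := by
    refine ⟨fun n => if n = 0 then 0 else g^[n - 1] (max N q), rfl, rfl, fun n => ?_⟩
    simp only [if_neg (by omega : ¬ n + 2 = 0), if_neg (by omega : ¬ n + 1 = 0)]
    show g^[n + 1] (max N q) = g (g^[n] (max N q))
    exact Function.iterate_succ_apply' g n (max N q)
  have hge : ∀ n, max N q ≤ idx (n + 1) := by
    intro n
    induction n with
    | zero => rw [hidx1]
    | succ n ih =>
      rw [hidxs n]
      have hNle : N ≤ idx (n + 1) := le_trans (le_max_left N q) ih
      have := (hg (idx (n + 1)) hNle).1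
      omega
  refine ⟨idx, hidx0, fun ℓ => ?_⟩
  cases ℓ with
  | zero =>
    rw [hidx0, hidx1]
    refine ⟨by omega, ?_⟩
    have hsupq : (Finset.Icc (0 + 1) (max N q)).sup π = π q := by
      apply le_antisymm
      · exact Finset.sup_le fun k hk => hqmax k (by rw [Finset.mem_Icc] at hk; omega)
      · exact Finset.le_sup (Finset.mem_Icc.mpr ⟨hq1, le_max_right N q⟩)
    rw [hsupq]
    exact hj
  | succ n =>
    have hNle : N ≤ idx (n + 1) := le_trans (le_max_left N q) (hge n)
    have h := hg (idx (n + 1)) hNle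
    rw [hidxs n]
    exact h

end ParityGame

end AuxLemmas
section AuxGame

namespace ParityGame

private def histPlay {S : Type} (σ : List S → S → S) (s : S) : ℕ → List S × S
  | 0 => ([], s)
  | n + 1 =>
    ((histPlay σ s n).1 ++ [(histPlay σ s n).2],
      σ (histPlay σ s n).1 (histPlay σ s n).2)

/-- From any state there is a play compatible with a given strategy. -/
private lemma exists_compatible_play {S : Type} (G : ParityGame S) (j : Fin 2)
    {σ : List S → S → S} (hσ : G.IsStrategy σ) (s : S) :
    ∃ ρ : ℕ → S, G.IsPlay ρ ∧ ρ 0 = s ∧ G.Compatible j σ ρ := by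
  classical
  refine ⟨fun n => (histPlay σ s n).2, ?_, rfl, ?_⟩
  · intro n
    show G.R (histPlay σ s n).2 (histPlay σ s (n + 1)).2
    rw [show histPlay σ s (n + 1) = ((histPlay σ s n).1 ++ [(histPlay σ s n).2],
      σ (histPlay σ s n).1 (histPlay σ s n).2) from rfl]
    exact hσ _ _
  · have hg1 : ∀ n, (histPlay σ s n).1 = List.ofFn (fun i : Fin n => (histPlay σ s i).2) := by
      intro n
      induction n with
      | zero => rfl
      | succ n ih =>
        show (histPlay σ s n).1 ++ [(histPlay σ s n).2] = _
        rw [ih, List.ofFn_succ']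
        simp [List.concat_eq_append]
    intro i _
    show (histPlay σ s (i + 1)).2 = _
    rw [show histPlay σ s (i + 1) = ((histPlay σ s i).1 ++ [(histPlay σ s i).2],
      σ (histPlay σ s i).1 (histPlay σ s i).2) from rfl]
    show σ (histPlay σ s i).1 (histPlay σ s i).2 = _
    rw [hg1 i]

/-- Key extension step: given the winning core of `j` is empty and a winning
strategy `σ` from `s`, every compatible play prefix can be extended by a
`(1-j)`-dominating segment. -/
private lemma extend_play {S : Type} [Fintype S] (G : ParityGame S) {j : Fin 2}
    (hA : G.WinCore j = ∅) {σ : List S → S → S} (hσ : G.IsStrategy σ) {s : S}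
    (hwin : ∀ ρ, G.IsPlay ρ → ρ 0 = s → G.Compatible j σ ρ → InOmega j (G.colorSeq ρ))
    (π : ℕ → S) (m : ℕ) (hplay : G.IsPlay π) (h0 : π 0 = s) (hcomp : G.Compatible j σ π) :
    ∃ (π' : ℕ → S) (m' : ℕ), m < m' ∧ (∀ k, k ≤ m → π' k = π k) ∧ G.IsPlay π' ∧
      π' 0 = s ∧ G.Compatible j σ π' ∧ G.SegDom (1 - j) π' m m' := by
  classical
  set σ' : List S → S → S := fun h u => σ (List.ofFn (fun k : Fin m => π k) ++ h) u with hσ'def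
  have hσ' : G.IsStrategy σ' := fun h u => hσ _ u
  have ht : π m ∉ G.WinCore j := by rw [hA]; exact Set.notMem_empty _
  have hex : ∃ ρ', G.IsPlay ρ' ∧ ρ' 0 = π m ∧ G.Compatible j σ' ρ' ∧
      ¬ G.BeginsInfDom j ρ' := by
    by_contra hc
    apply ht
    refine ⟨σ', hσ', fun ρ' h1 h2 h3 => ?_⟩
    by_contra h4
    exact hc ⟨ρ', h1, h2, h3, h4⟩
  obtain ⟨ρ', hplay', h0', hcomp', hnd⟩ := hex
  set ρ'' : ℕ → S := fun k => if k < m then π k else ρ' (k - m) with hρ''def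
  have hagree : ∀ k, k ≤ m → ρ'' k = π k := by
    intro k hk
    rcases lt_or_eq_of_le hk with h | h
    · simp [hρ''def, h]
    · subst h
      simp [hρ''def, h0']
  have hshift : ∀ i, ρ'' (m + i) = ρ' i := by
    intro i
    have h1 : ¬ (m + i < m) := by omega
    have h2 : m + i - m = i := by omega
    simp [hρ''def, h1, h2]
  have hplay'' : G.IsPlay ρ'' := by
    intro k
    rcases Nat.lt_or_ge (k + 1) (m + 1) with h | h
    · rw [hagree k (by omega), hagree (k + 1) (by omega)]
      exact hplay k
    · have e1 := hshift (k - m)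
      rw [show m + (k - m) = k by omega] at e1
      have e2 := hshift (k - m + 1)
      rw [show m + (k - m + 1) = k + 1 by omega] at e2
      rw [e1, e2]
      exact hplay' (k - m)
  have h0'' : ρ'' 0 = s := by rw [hagree 0 (Nat.zero_le m)]; exact h0
  have hcomp'' : G.Compatible j σ ρ'' := by
    intro p hp
    rcases Nat.lt_or_ge p m with h | h
    · have e1 : (List.ofFn fun k : Fin p => ρ'' k) = List.ofFn fun k : Fin p => π k :=
        congrArg List.ofFn (funext fun k => hagree k.val (by have := k.isLt; omega))
      rw [hagree p (le_of_lt h)] at hp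
      rw [hagree (p + 1) (by omega), hagree p (le_of_lt h), e1]
      exact hcomp p hp
    · obtain ⟨i, rfl⟩ : ∃ i, p = m + i := ⟨p - m, by omega⟩
      rw [hshift i] at hp
      have e2 : ρ'' (m + i + 1) = ρ' (i + 1) := by
        rw [show m + i + 1 = m + (i + 1) by omega, hshift]
      have ea : (List.ofFn fun k : Fin m => ρ'' ((Fin.castLE (Nat.le_add_right m i) k : Fin (m + i)) : ℕ)) =
          List.ofFn fun k : Fin m => π k :=
        congrArg List.ofFn (funext fun k => hagree k.val (le_of_lt k.isLt))
      have eb : (List.ofFn fun k : Fin i => ρ'' ((Fin.natAdd m k : Fin (m + i)) : ℕ)) =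
          List.ofFn fun k : Fin i => ρ' k :=
        congrArg List.ofFn (funext fun k => hshift k.val)
      have e3 : (List.ofFn fun k : Fin (m + i) => ρ'' k) =
          (List.ofFn fun k : Fin m => π k) ++ (List.ofFn fun k : Fin i => ρ' k) := by
        rw [List.ofFn_add, ea, eb]
      rw [e2, e3, hshift i]
      exact hcomp' i hp
  have hΩ'' : InOmega j (G.colorSeq ρ'') := hwin ρ'' hplay'' h0'' hcomp''
  have hΩ' : InOmega j (G.colorSeq ρ') := by
    have h1 := inOmega_tail m hΩ''
    have h2 : (fun i => G.colorSeq ρ'' (m + i)) = G.colorSeq ρ' := by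
      funext i
      show G.c (ρ'' (m + i)) = G.c (ρ' i)
      rw [hshift]
    rwa [h2] at h1
  have hKb : ∀ i, G.colorSeq ρ' i ≤ Finset.univ.sup G.c :=
    fun i => Finset.le_sup (f := G.c) (Finset.mem_univ (ρ' i))
  obtain ⟨q, hq1, hqmax, hqpar⟩ := exists_bad_max hKb hΩ' hnd
  have hsup : ((Finset.Icc (m + 1) (m + q)).sup fun k => G.c (ρ'' k)) = G.c (ρ' q) := by
    apply le_antisymm
    · apply Finset.sup_le
      intro k hk
      rw [Finset.mem_Icc] at hk
      have e := hshift (k - m)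
      rw [show m + (k - m) = k by omega] at e
      rw [e]
      exact hqmax (k - m) (by omega)
    · calc G.c (ρ' q) = G.c (ρ'' (m + q)) := by rw [hshift q]
        _ ≤ _ := Finset.le_sup (f := fun k => G.c (ρ'' k)) (s := Finset.Icc (m + 1) (m + q))
          (by rw [Finset.mem_Icc]; omega)
  refine ⟨ρ'', m + q, by omega, hagree, hplay'', h0'', hcomp'', ?_⟩
  show m < m + q ∧ ((Finset.Icc (m + 1) (m + q)).sup fun k => G.c (ρ'' k)) % 2 = ((1 - j : Fin 2) : ℕ)
  refine ⟨by omega, ?_⟩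
  rw [hsup]
  exact hqpar

end ParityGame

end AuxGame
/-- The winning core `A_j(G)` of player `j` is empty iff the
winning region `W_j(G)` of player `j` is empty. -/
theorem winCore_empty_iff_winRegion_empty {S : Type} [Fintype S] (G : ParityGame S)
    (j : Fin 2) :
    G.WinCore j = ∅ ↔ G.WinRegion j = ∅ := by
  classical
  constructor
  · -- hard direction: empty winning core forces empty winning region
    intro hA
    rw [Set.eq_empty_iff_forall_notMem]
    intro s hs
    obtain ⟨σ, hσ, hwin⟩ := hs
    obtain ⟨π₀, hp₀, h0₀, hc₀⟩ := ParityGame.exists_compatible_play G j hσ s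
    have key : ∀ (π : ℕ → S) (m : ℕ), ∃ (π' : ℕ → S) (m' : ℕ),
        (G.IsPlay π ∧ π 0 = s ∧ G.Compatible j σ π) →
        (m < m' ∧ (∀ k, k ≤ m → π' k = π k) ∧ G.IsPlay π' ∧ π' 0 = s ∧
          G.Compatible j σ π' ∧ G.SegDom (1 - j) π' m m') := by
      intro π m
      by_cases h : G.IsPlay π ∧ π 0 = s ∧ G.Compatible j σ π
      · obtain ⟨π', m', h'⟩ := ParityGame.extend_play G hA hσ hwin π m h.1 h.2.1 h.2.2
        exact ⟨π', m', fun _ => h'⟩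
      · exact ⟨π, 0, fun hc => absurd hc h⟩
    choose F M hFM using key
    obtain ⟨D, hD0, hDsucc⟩ : ∃ D : ℕ → (ℕ → S) × ℕ, D 0 = (π₀, 0) ∧
        ∀ n, D (n + 1) = (F (D n).1 (D n).2, M (D n).1 (D n).2) :=
      ⟨fun n => (fun p => (F p.1 p.2, M p.1 p.2))^[n] (π₀, 0), rfl,
        fun n => Function.iterate_succ_apply' _ _ _⟩
    have hInv : ∀ n, G.IsPlay (D n).1 ∧ (D n).1 0 = s ∧ G.Compatible j σ (D n).1 := by
      intro n
      induction n with
      | zero => rw [hD0]; exact ⟨hp₀, h0₀, hc₀⟩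
      | succ n ih =>
        have h := hFM (D n).1 (D n).2 ih
        rw [hDsucc n]
        exact ⟨h.2.2.1, h.2.2.2.1, h.2.2.2.2.1⟩
    have hstep : ∀ n, (D n).2 < (D (n + 1)).2 ∧
        (∀ k, k ≤ (D n).2 → (D (n + 1)).1 k = (D n).1 k) ∧
        G.SegDom (1 - j) (D (n + 1)).1 (D n).2 (D (n + 1)).2 := by
      intro n
      have h := hFM (D n).1 (D n).2 (hInv n)
      rw [hDsucc n]
      exact ⟨h.1, h.2.1, h.2.2.2.2.2⟩
    have hμ0 : (D 0).2 = 0 := by rw [hD0]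
    have hμmono : ∀ a b, a ≤ b → (D a).2 ≤ (D b).2 := by
      intro a b hab
      induction b with
      | zero => simp [show a = 0 by omega]
      | succ b ih =>
        rcases Nat.lt_or_ge a (b + 1) with h | h
        · exact le_trans (ih (by omega)) (le_of_lt (hstep b).1)
        · simp [show a = b + 1 by omega]
    have hμself : ∀ n, n ≤ (D n).2 := by
      intro n
      induction n with
      | zero => exact Nat.zero_le _
      | succ n ih => have := (hstep n).1; omega
    have hagD : ∀ n d, ∀ k, k ≤ (D n).2 → (D (n + d)).1 k = (D n).1 k := by
      intro n d
      induction d with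
      | zero => intro k _; rfl
      | succ d ih =>
        intro k hk
        have h1 : k ≤ (D (n + d)).2 := le_trans hk (hμmono n (n + d) (by omega))
        have h2 := (hstep (n + d)).2.1 k h1
        rw [show n + (d + 1) = (n + d) + 1 by omega, h2]
        exact ih k hk
    have hρeq : ∀ n k, k ≤ (D n).2 → (D k).1 k = (D n).1 k := by
      intro n k hk
      rcases Nat.le_total k n with h | h
      · have h2 := hagD k (n - k) k (hμself k)
        rw [show k + (n - k) = n by omega] at h2
        exact h2.symm
      · have h2 := hagD n (k - n) k hk
        rw [show n + (k - n) = k by omega] at h2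
        exact h2
    set ρ : ℕ → S := fun k => (D k).1 k with hρdef
    have hρeq' : ∀ n k, k ≤ (D n).2 → ρ k = (D n).1 k := fun n k hk => hρeq n k hk
    have hρplay : G.IsPlay ρ := by
      intro k
      have hk1 : k ≤ (D (k + 1)).2 := le_trans (by omega) (hμself (k + 1))
      have hk2 : k + 1 ≤ (D (k + 1)).2 := hμself (k + 1)
      rw [hρeq' (k + 1) k hk1, hρeq' (k + 1) (k + 1) hk2]
      exact (hInv (k + 1)).1 k
    have hρ0 : ρ 0 = s := by
      show (D 0).1 0 = s
      rw [hD0]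
      exact h0₀
    have hρcomp : G.Compatible j σ ρ := by
      intro p hp
      have hb : ∀ k, k ≤ p + 1 → ρ k = (D (p + 1)).1 k :=
        fun k hk => hρeq' (p + 1) k (le_trans hk (hμself (p + 1)))
      have e1 : (List.ofFn fun k : Fin p => ρ k) = List.ofFn fun k : Fin p => (D (p + 1)).1 k :=
        congrArg List.ofFn (funext fun k => hb k.val (by have := k.isLt; omega))
      rw [hb p (by omega)] at hp
      rw [hb (p + 1) (le_refl _), hb p (by omega), e1]
      exact (hInv (p + 1)).2.2 p hp
    have hΩ : InOmega j (G.colorSeq ρ) := hwin ρ hρplay hρ0 hρcomp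
    have hΩ' : InOmega (1 - j) (G.colorSeq ρ) := by
      apply ParityGame.inOmega_of_chops
        (K := Finset.univ.sup G.c)
        (fun i => Finset.le_sup (f := G.c) (Finset.mem_univ (ρ i)))
        (fun n => (D n).2) hμ0
      intro ℓ
      obtain ⟨hlt, hsup⟩ := (hstep ℓ).2.2
      refine ⟨hlt, ?_⟩
      show ((Finset.Icc ((D ℓ).2 + 1) ((D (ℓ + 1)).2)).sup (G.colorSeq ρ)) % 2 =
        ((1 - j : Fin 2) : ℕ)
      have e : ((Finset.Icc ((D ℓ).2 + 1) ((D (ℓ + 1)).2)).sup (G.colorSeq ρ)) =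
          ((Finset.Icc ((D ℓ).2 + 1) ((D (ℓ + 1)).2)).sup fun k => G.c ((D (ℓ + 1)).1 k)) := by
        apply Finset.sup_congr rfl
        intro k hk
        rw [Finset.mem_Icc] at hk
        show G.c (ρ k) = _
        rw [hρeq' (ℓ + 1) k hk.2]
      rw [e]
      exact hsup
    exact absurd hΩ' (fun h => ParityGame.inOmega_not_both hΩ h)
  · -- easy direction: the winning core is contained in the winning region
    intro hW
    rw [Set.eq_empty_iff_forall_notMem] at hW ⊢
    intro s hs
    obtain ⟨σ, hσ, h⟩ := hs
    refine hW s ⟨σ, hσ, fun ρ h1 h2 h3 => ?_⟩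
    obtain ⟨idx, hidx0, hseg⟩ := h ρ h1 h2 h3
    exact ParityGame.inOmega_of_chops
      (K := Finset.univ.sup G.c)
      (fun i => Finset.le_sup (f := G.c) (Finset.mem_univ (ρ i))) idx hidx0 hseg
end

section
/- Let G be a parity game with largest color d, let k ∈ {0,1} be the player with d ≡ k (mod 2), let S^d be the set of states of color d, let U = Attr⁺_k(G, S^d) be the positive attractor of S^d for player k, and let G' = G↾(S \ U). Then the winning core of player 1−k is unchanged: A_{1−k}(G) = A_{1−k}(G'). -/
namespace ParityGame

variable {S : Type} (G : ParityGame S)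

/-! ### Attractor iteration and rank -/

def iterA (k : Fin 2) (T : Set S) : ℕ → Set S
  | 0 => T
  | n+1 => iterA k T n ∪ {s | G.owner s = k ∧ ∃ t ∈ iterA k T n, G.R s t}
            ∪ {s | G.owner s ≠ k ∧ ∀ t, G.R s t → t ∈ iterA k T n}

lemma iterA_mono (k : Fin 2) (T : Set S) : Monotone (G.iterA k T) :=
  monotone_nat_of_le_succ fun _ _ hs => Or.inl (Or.inl hs)

lemma iterA_subset (k : Fin 2) (T : Set S) : ∀ n, G.iterA k T n ⊆ G.attractor k T := by
  intro n
  induction n with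
  | zero => exact fun s hs => AttrRel.base hs
  | succ n ih =>
    rintro s ((hs | ⟨ho, t, ht, hr⟩) | ⟨ho, hall⟩)
    · exact ih hs
    · exact AttrRel.own ho hr (ih ht)
    · exact AttrRel.opp ho fun t hr => ih (hall t hr)

lemma attr_mem_iter [Fintype S] {k : Fin 2} {T : Set S} {s : S}
    (hs : s ∈ G.attractor k T) : ∃ n, s ∈ G.iterA k T n := by
  induction hs with
  | base h => exact ⟨0, h⟩
  | own ho hr _ ih =>
    obtain ⟨n, hn⟩ := ih
    exact ⟨n+1, Or.inl (Or.inr ⟨ho, _, hn, hr⟩)⟩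
  | @opp s ho hall ih =>
    classical
    have hch : ∀ t : S, ∃ n, G.R s t → t ∈ G.iterA k T n := by
      intro t
      by_cases h : G.R s t
      · obtain ⟨n, hn⟩ := ih t h; exact ⟨n, fun _ => hn⟩
      · exact ⟨0, fun hh => absurd hh h⟩
    choose f hf using hch
    refine ⟨(Finset.univ.sup f) + 1, Or.inr ⟨ho, fun t hr => ?_⟩⟩
    exact G.iterA_mono k T (Finset.le_sup (Finset.mem_univ t)) (hf t hr)

noncomputable def rankA (k : Fin 2) (T : Set S) (s : S) : ℕ :=
  sInf {n | s ∈ G.iterA k T n}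

lemma mem_iterA_rankA [Fintype S] {k : Fin 2} {T : Set S} {s : S}
    (hs : s ∈ G.attractor k T) : s ∈ G.iterA k T (G.rankA k T s) :=
  Nat.sInf_mem (G.attr_mem_iter hs)

lemma rankA_le {k : Fin 2} {T : Set S} {s : S} {n : ℕ}
    (h : s ∈ G.iterA k T n) : G.rankA k T s ≤ n := Nat.sInf_le h

lemma rank_step [Fintype S] {k : Fin 2} {T : Set S} {s : S}
    (hs : s ∈ G.attractor k T) (hb : s ∉ T) :
    (G.owner s = k → ∃ t, G.R s t ∧ t ∈ G.attractor k T ∧ G.rankA k T t < G.rankA k T s) ∧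
    (G.owner s ≠ k → ∀ t, G.R s t → t ∈ G.attractor k T ∧ G.rankA k T t < G.rankA k T s) := by
  have hmem := G.mem_iterA_rankA hs
  cases hn : G.rankA k T s with
  | zero =>
    rw [hn] at hmem
    exact absurd hmem hb
  | succ n =>
    rw [hn] at hmem
    rcases hmem with ((h | ⟨ho, t, ht, hr⟩) | ⟨ho, hall⟩)
    · have := G.rankA_le h; omega
    · constructor
      · intro _
        exact ⟨t, hr, G.iterA_subset k T n ht, by have := G.rankA_le ht; omega⟩
      · intro h; exact absurd ho h
    · constructor
      · intro h; exact absurd h ho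
      · intro _ t hr
        exact ⟨G.iterA_subset k T n (hall t hr), by have := G.rankA_le (hall t hr); omega⟩

/-! ### A positional reaching strategy for the attractor -/

open Classical in
noncomputable def tauA (k : Fin 2) (T : Set S) (d : ℕ) : S → S := fun t =>
  if h1 : ∃ u, G.R t u ∧ G.c u = d ∧ t ∈ T then h1.choose
  else if h2 : ∃ u, G.R t u ∧ u ∈ G.attractor k T ∧ G.rankA k T u < G.rankA k T t then
    h2.choose
  else (G.total t).choose

lemma tauA_R (k : Fin 2) (T : Set S) (d : ℕ) (t : S) : G.R t (G.tauA k T d t) := by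
  unfold tauA
  split_ifs with h1 h2
  · exact h1.choose_spec.1
  · exact h2.choose_spec.1
  · exact (G.total t).choose_spec

lemma reach_base (k : Fin 2) (d : ℕ) (T : Set S)
    (hTk : ∀ s ∈ T, G.owner s = k → ∃ u, G.R s u ∧ G.c u = d)
    (hTo : ∀ s ∈ T, G.owner s ≠ k → ∀ u, G.R s u → G.c u = d)
    {s : S} (hbase : s ∈ T) (ψ : ℕ → S) (h0 : ψ 0 = s)
    (hpl : ∀ i, G.R (ψ i) (ψ (i+1)))
    (hτ : ∀ i, G.owner (ψ i) = k → ψ (i+1) = G.tauA k T d (ψ i)) :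
    ∃ p, 1 ≤ p ∧ G.c (ψ p) = d := by
  by_cases ho : G.owner s = k
  · obtain ⟨u, hu, hcu⟩ := hTk s hbase ho
    have h1 : ψ 1 = G.tauA k T d s := by
      have := hτ 0 (by rw [h0]; exact ho)
      rwa [h0] at this
    refine ⟨1, le_refl 1, ?_⟩
    rw [h1]
    unfold tauA
    rw [dif_pos ⟨u, hu, hcu, hbase⟩]
    exact (⟨u, hu, hcu, hbase⟩ : ∃ u, G.R s u ∧ G.c u = d ∧ s ∈ T).choose_spec.2.1
  · refine ⟨1, le_refl 1, hTo s hbase ho (ψ 1) ?_⟩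
    have := hpl 0
    rwa [h0] at this

lemma reachA [Fintype S] (k : Fin 2) (d : ℕ) (T : Set S)
    (hTk : ∀ s ∈ T, G.owner s = k → ∃ u, G.R s u ∧ G.c u = d)
    (hTo : ∀ s ∈ T, G.owner s ≠ k → ∀ u, G.R s u → G.c u = d) :
    ∀ n s, s ∈ G.attractor k T → G.rankA k T s ≤ n →
      ∀ ψ : ℕ → S, ψ 0 = s → (∀ i, G.R (ψ i) (ψ (i+1))) →
      (∀ i, G.owner (ψ i) = k → ψ (i+1) = G.tauA k T d (ψ i)) →
      ∃ p, 1 ≤ p ∧ G.c (ψ p) = d := by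
  intro n
  induction n with
  | zero =>
    intro s hs hr ψ h0 hpl hτ
    have hbase : s ∈ T := by
      have := G.mem_iterA_rankA hs
      have hz : G.rankA k T s = 0 := Nat.le_zero.mp hr
      rwa [hz] at this
    exact G.reach_base k d T hTk hTo hbase ψ h0 hpl hτ
  | succ n ih =>
    intro s hs hr ψ h0 hpl hτ
    by_cases hbase : s ∈ T
    · exact G.reach_base k d T hTk hTo hbase ψ h0 hpl hτ
    · obtain ⟨hk', hnk⟩ := G.rank_step hs hbase
      have hstep : ψ 1 ∈ G.attractor k T ∧ G.rankA k T (ψ 1) < G.rankA k T s := by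
        by_cases ho : G.owner s = k
        · obtain ⟨t, htR, htA, htlt⟩ := hk' ho
          have h1 : ψ 1 = G.tauA k T d s := by
            have := hτ 0 (by rw [h0]; exact ho)
            rwa [h0] at this
          have hcond : ∃ u, G.R s u ∧ u ∈ G.attractor k T ∧ G.rankA k T u < G.rankA k T s :=
            ⟨t, htR, htA, htlt⟩
          have hval : G.tauA k T d s ∈ G.attractor k T ∧
              G.rankA k T (G.tauA k T d s) < G.rankA k T s := by
            unfold tauA
            rw [dif_neg (fun h => hbase h.choose_spec.2.2), dif_pos hcond]
            exact ⟨hcond.choose_spec.2.1, hcond.choose_spec.2.2⟩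
          rw [h1]; exact hval
        · refine hnk ho (ψ 1) ?_
          have := hpl 0
          rwa [h0] at this
      obtain ⟨p, hp1, hpd⟩ := ih (ψ 1) hstep.1 (by omega) (fun t => ψ (t+1)) rfl
        (fun i => hpl (i+1)) (fun i => hτ (i+1))
      exact ⟨p+1, by omega, hpd⟩

/-! ### Building plays that follow a prefix, then a strategy/counter-strategy -/

variable (σ : List S → S → S) (τ : S → S) (ρ : ℕ → S) (m : ℕ) (j : Fin 2)

noncomputable def fstep : List S → S := fun l =>
  if l.length ≤ m then ρ l.length
  else
    (fun t => if G.owner t = j then σ l.dropLast t else τ t) (l.getLastD (ρ 0))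

noncomputable def fhist : ℕ → List S
  | 0 => []
  | n+1 => fhist n ++ [G.fstep σ τ ρ m j (fhist n)]

noncomputable def fplay (n : ℕ) : S := G.fstep σ τ ρ m j (G.fhist σ τ ρ m j n)

lemma fhist_length (n : ℕ) : (G.fhist σ τ ρ m j n).length = n := by
  induction n with
  | zero => rfl
  | succ n ih => simp [fhist, ih]

lemma fhist_eq (n : ℕ) :
    G.fhist σ τ ρ m j n = List.ofFn (fun i : Fin n => G.fplay σ τ ρ m j i) := by
  induction n with
  | zero => rfl
  | succ n ih =>
    rw [List.ofFn_succ']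
    show G.fhist σ τ ρ m j n ++ [G.fplay σ τ ρ m j n] = _
    simp only [List.concat_eq_append, Fin.coe_castSucc, Fin.val_last, ih]

lemma fplay_le {n : ℕ} (hn : n ≤ m) : G.fplay σ τ ρ m j n = ρ n := by
  unfold fplay fstep
  rw [G.fhist_length σ τ ρ m j n, if_pos hn]

lemma fplay_succ {n : ℕ} (hn : m ≤ n) :
    G.fplay σ τ ρ m j (n+1) =
      if G.owner (G.fplay σ τ ρ m j n) = j
      then σ (G.fhist σ τ ρ m j n) (G.fplay σ τ ρ m j n)
      else τ (G.fplay σ τ ρ m j n) := by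
  show G.fstep σ τ ρ m j (G.fhist σ τ ρ m j n ++ [G.fplay σ τ ρ m j n]) = _
  unfold fstep
  have hlen : (G.fhist σ τ ρ m j n ++ [G.fplay σ τ ρ m j n]).length = n + 1 := by
    simp [G.fhist_length σ τ ρ m j n]
  rw [hlen, if_neg (by omega), List.getLastD_concat, List.dropLast_concat]

lemma fplay_isPlay (hσ : G.IsStrategy σ) (hτ : ∀ t, G.R t (τ t))
    (hρ : ∀ i, i < m → G.R (ρ i) (ρ (i+1))) : G.IsPlay (G.fplay σ τ ρ m j) := by
  intro i
  rcases lt_or_ge i m with h | h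
  · rw [G.fplay_le σ τ ρ m j (le_of_lt h), G.fplay_le σ τ ρ m j (by omega)]
    exact hρ i h
  · rw [G.fplay_succ σ τ ρ m j h]
    split_ifs
    · exact hσ _ _
    · exact hτ _

lemma fplay_compat
    (hρc : ∀ i, i < m → G.owner (ρ i) = j →
      ρ (i+1) = σ (List.ofFn fun k : Fin i => ρ k) (ρ i)) :
    G.Compatible j σ (G.fplay σ τ ρ m j) := by
  intro i hi
  rcases lt_or_ge i m with h | h
  · have heq : (List.ofFn fun k : Fin i => G.fplay σ τ ρ m j k)
        = List.ofFn fun k : Fin i => ρ k := by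
      apply congrArg List.ofFn
      funext k
      exact G.fplay_le σ τ ρ m j (by omega)
    rw [G.fplay_le σ τ ρ m j (by omega : i + 1 ≤ m), heq]
    rw [G.fplay_le σ τ ρ m j h.le] at hi ⊢
    exact hρc i h hi
  · rw [G.fplay_succ σ τ ρ m j h, if_pos hi, G.fhist_eq σ τ ρ m j i]

lemma fplay_tau {i : ℕ} (h : m ≤ i) (ho : G.owner (G.fplay σ τ ρ m j i) ≠ j) :
    G.fplay σ τ ρ m j (i+1) = τ (G.fplay σ τ ρ m j i) := by
  rw [G.fplay_succ σ τ ρ m j h, if_neg ho]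

/-! ### A play beginning with infinitely many `j`-dominating segments never
sees the opponent's top color after position 0 -/

lemma begins_no_top {j k : Fin 2} {d : ℕ} (hjk : j ≠ k) (hd : d % 2 = (k : ℕ))
    (hcd : ∀ s, G.c s ≤ d) {ρ : ℕ → S} (hB : G.BeginsInfDom j ρ)
    {p : ℕ} (hp : 1 ≤ p) (hpd : G.c (ρ p) = d) : False := by
  classical
  obtain ⟨idx, h0, hseg⟩ := hB
  have hmono : ∀ ℓ, idx ℓ < idx (ℓ+1) := fun ℓ => (hseg ℓ).1
  have hge : ∀ ℓ, ℓ ≤ idx ℓ := by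
    intro ℓ
    induction ℓ with
    | zero => omega
    | succ n ih => have := hmono n; omega
  have hP0 : idx 0 < p := by omega
  have hPL : idx (Nat.findGreatest (fun ℓ => idx ℓ < p) p) < p :=
    Nat.findGreatest_spec (P := fun ℓ => idx ℓ < p) (n := p) (m := 0) (Nat.zero_le p) hP0
  set L := Nat.findGreatest (fun ℓ => idx ℓ < p) p with hL
  have hup : p ≤ idx (L+1) := by
    by_contra hcon
    push_neg at hcon
    have hL1 : L + 1 ≤ p := by have := hge L; omega
    exact Nat.findGreatest_is_greatest (Nat.lt_succ_self L) hL1 hcon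
  have hmem : p ∈ Finset.Icc (idx L + 1) (idx (L+1)) := Finset.mem_Icc.mpr ⟨by omega, hup⟩
  have hsup1 : d ≤ (Finset.Icc (idx L + 1) (idx (L+1))).sup fun k => G.c (ρ k) := by
    have h1 := Finset.le_sup (f := fun k => G.c (ρ k)) hmem
    change G.c (ρ p) ≤ _ at h1
    omega
  have hsup2 : ((Finset.Icc (idx L + 1) (idx (L+1))).sup fun k => G.c (ρ k)) ≤ d :=
    Finset.sup_le fun x _ => hcd _
  have hsupd : ((Finset.Icc (idx L + 1) (idx (L+1))).sup fun k => G.c (ρ k)) = d := le_antisymm hsup2 hsup1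
  have hj := (hseg L).2
  rw [hsupd, hd] at hj
  exact hjk (Fin.ext hj.symm)

lemma pmap_ofFn {p : S → Prop} {n : ℕ} (f : Fin n → S) (H : ∀ a ∈ List.ofFn f, p a) :
    List.pmap (fun a h => (⟨a, h⟩ : Subtype p)) (List.ofFn f) H
      = List.ofFn (fun i => (⟨f i, H _ (List.mem_ofFn.mpr ⟨i, rfl⟩)⟩ : Subtype p)) := by
  apply List.ext_getElem
  · simp
  · intro i h1 h2
    simp [List.getElem_pmap]

end ParityGame

open ParityGame

/-- Let `d` be the largest color of `G`, `k` the player with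
`d ≡ k (mod 2)`, `S^d` the states of color `d`, `U = Attr⁺_k(G, S^d)` and
`G' = G ↾ (S \\ U)` (whose transition relation is assumed total). Then
`A_{1-k}(G) = A_{1-k}(G')`. -/
theorem winCore_restrict_posAttractor {S : Type} [Fintype S] (G : ParityGame S)
    (d : ℕ) (k : Fin 2) (hc : ∀ s, 1 ≤ G.c s ∧ G.c s ≤ d) (hd : ∃ s, G.c s = d)
    (hk : d % 2 = (k : ℕ))
    (U : Set S) (hU : U = G.posAttractor k {s | G.c s = d})
    (htot : ∀ s : ↥Uᶜ, ∃ t : ↥Uᶜ, G.R s.1 t.1) :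
    G.WinCore (1 - k) = Subtype.val '' ((G.restrict Uᶜ htot).WinCore (1 - k)) := by
  classical
  set j : Fin 2 := 1 - k with hjdef
  have hjk : j ≠ k := by
    have h2 : ∀ a : Fin 2, 1 - a ≠ a := by decide
    exact h2 k
  have hne : ∀ a : Fin 2, a ≠ j → a = k := by
    have h2 : ∀ a b : Fin 2, a ≠ 1 - b → a = b := by decide
    exact fun a ha => h2 a k ha
  set B : Set S := {s | G.owner s = k ∧ ∃ t ∈ {s : S | G.c s = d}, G.R s t} ∪
      {s | G.owner s ≠ k ∧ ∀ t, G.R s t → t ∈ {s : S | G.c s = d}} with hBdef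
  have hUB : U = G.attractor k B := hU
  have hUmem : ∀ x : S, x ∈ U ↔ G.AttrRel k B x := by
    intro x; rw [hUB]; exact Iff.rfl
  set τ : S → S := G.tauA k B d with hτdef
  have hτR : ∀ t, G.R t (τ t) := G.tauA_R k B d
  have hclU : ∀ s, s ∉ U → G.owner s = k → ∀ t, G.R s t → t ∉ U := by
    intro s hs ho t hrt ht
    exact hs ((hUmem s).mpr (AttrRel.own ho hrt ((hUmem t).mp ht)))
  have hTk : ∀ s ∈ B, G.owner s = k → ∃ u, G.R s u ∧ G.c u = d := by
    rintro s (⟨_, t, ht, hr⟩ | ⟨ho, _⟩) hok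
    · exact ⟨t, hr, ht⟩
    · exact absurd hok ho
  have hTo : ∀ s ∈ B, G.owner s ≠ k → ∀ u, G.R s u → G.c u = d := by
    rintro s (⟨ho, _⟩ | ⟨_, hall⟩) hok u hr
    · exact absurd ho hok
    · exact hall u hr
  have hreach : ∀ s, s ∈ U → ∀ ψ : ℕ → S, ψ 0 = s → (∀ i, G.R (ψ i) (ψ (i+1))) →
      (∀ i, G.owner (ψ i) = k → ψ (i+1) = τ (ψ i)) →
      ∃ p, 1 ≤ p ∧ G.c (ψ p) = d := by
    intro s hs ψ h0 hpl htt
    have hsA : s ∈ G.attractor k B := by rwa [hUB] at hs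
    exact G.reachA k d B hTk hTo (G.rankA k B s) s hsA le_rfl ψ h0 hpl htt
  have claim : ∀ (σ : List S → S → S), G.IsStrategy σ → ∀ s : S,
      (∀ ρ, G.IsPlay ρ → ρ 0 = s → G.Compatible j σ ρ → G.BeginsInfDom j ρ) →
      ∀ ρ, G.IsPlay ρ → ρ 0 = s → G.Compatible j σ ρ → ∀ i, ρ i ∉ U := by
    intro σ hσ s hwin ρ hρ h0 hcomp i hiU
    have hag : ∀ n, n ≤ i → G.fplay σ τ ρ i j n = ρ n := fun n hn =>
      G.fplay_le σ τ ρ i j hn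
    have hplq : G.IsPlay (G.fplay σ τ ρ i j) :=
      G.fplay_isPlay σ τ ρ i j hσ hτR (fun n _ => hρ n)
    have hcompq : G.Compatible j σ (G.fplay σ τ ρ i j) :=
      G.fplay_compat σ τ ρ i j (fun n _ ho => hcomp n ho)
    have h0q : G.fplay σ τ ρ i j 0 = s := by rw [hag 0 (Nat.zero_le i), h0]
    have hBq := hwin _ hplq h0q hcompq
    obtain ⟨p, hp1, hpd⟩ := hreach (G.fplay σ τ ρ i j i)
      (by rw [hag i le_rfl]; exact hiU)
      (fun t => G.fplay σ τ ρ i j (i + t)) rfl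
      (fun t => hplq (i + t))
      (fun t hot => G.fplay_tau σ τ ρ i j (Nat.le_add_right i t)
        (fun hj' => hjk (hj'.symm.trans hot)))
    exact G.begins_no_top hjk hk (fun t => (hc t).2) hBq (p := i + p) (by omega) hpd
  apply Set.Subset.antisymm
  · rintro s ⟨σ, hσ, hwin⟩
    have hsU : s ∉ U := by
      have hpl0 : G.IsPlay (G.fplay σ τ (fun _ => s) 0 j) :=
        G.fplay_isPlay σ τ _ 0 j hσ hτR (fun n hn => absurd hn (by omega))
      have h00 : G.fplay σ τ (fun _ => s) 0 j 0 = s := G.fplay_le σ τ _ 0 j le_rfl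
      have hcomp0 : G.Compatible j σ (G.fplay σ τ (fun _ => s) 0 j) :=
        G.fplay_compat σ τ _ 0 j (fun n hn => absurd hn (by omega))
      have := claim σ hσ s hwin _ hpl0 h00 hcomp0 0
      rwa [h00] at this
    refine ⟨⟨s, hsU⟩, ?_, rfl⟩
    set σ' : List ↥Uᶜ → ↥Uᶜ → ↥Uᶜ := fun h t =>
      if hm : σ (h.map Subtype.val) t.1 ∈ Uᶜ then ⟨σ (h.map Subtype.val) t.1, hm⟩
      else (htot t).choose with hσ'def
    have hσ' : (G.restrict Uᶜ htot).IsStrategy σ' := by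
      intro h t
      show G.R t.1 (σ' h t).1
      rw [hσ'def]
      dsimp only
      split_ifs with hm
      · exact hσ _ _
      · exact (htot t).choose_spec
    refine ⟨σ', hσ', ?_⟩
    intro ρ' hρ' h0' hcomp'
    set ρ : ℕ → S := fun i => (ρ' i).1 with hρdef
    have hρ : G.IsPlay ρ := fun i => hρ' i
    have h0 : ρ 0 = s := congrArg Subtype.val h0'
    have key : ∀ i, G.owner (ρ i) = j →
        ρ (i+1) = σ (List.ofFn fun m : Fin i => ρ m) (ρ i) := by
      intro i
      induction i using Nat.strong_induction_on with
      | _ i ih =>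
        intro hoi
        have hag : ∀ n, n ≤ i → G.fplay σ τ ρ i j n = ρ n := fun n hn =>
          G.fplay_le σ τ ρ i j hn
        have hplq : G.IsPlay (G.fplay σ τ ρ i j) :=
          G.fplay_isPlay σ τ ρ i j hσ hτR (fun n _ => hρ n)
        have hcompq : G.Compatible j σ (G.fplay σ τ ρ i j) :=
          G.fplay_compat σ τ ρ i j (fun n hn ho => ih n hn ho)
        have h0q : G.fplay σ τ ρ i j 0 = s := by rw [hag 0 (Nat.zero_le i), h0]
        have hnotU := claim σ hσ s hwin _ hplq h0q hcompq (i+1)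
        have hofn : (List.ofFn fun n : Fin i => G.fplay σ τ ρ i j n)
            = List.ofFn fun n : Fin i => ρ n :=
          congrArg List.ofFn (funext fun n => hag n (Nat.le_of_lt n.isLt))
        have hstep : G.fplay σ τ ρ i j (i+1)
            = σ (List.ofFn fun m : Fin i => ρ m) (ρ i) := by
          rw [G.fplay_succ σ τ ρ i j le_rfl, hag i le_rfl, if_pos hoi,
            G.fhist_eq σ τ ρ i j i, hofn]
        have hσU : σ (List.ofFn fun m : Fin i => ρ m) (ρ i) ∉ U := by
          rw [← hstep]; exact hnotU
        have h1 := hcomp' i hoi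
        have h2 : ρ (i+1) = (σ' (List.ofFn fun m : Fin i => ρ' m) (ρ' i)).1 :=
          congrArg Subtype.val h1
        have hmap : (List.ofFn fun m : Fin i => ρ' m).map Subtype.val
            = List.ofFn fun m : Fin i => ρ m := by
          rw [List.map_ofFn]; rfl
        rw [h2, hσ'def]
        dsimp only
        rw [dif_pos (show σ ((List.ofFn fun m : Fin i => ρ' m).map Subtype.val) (ρ' i).1 ∈ Uᶜ by
          rw [hmap]; exact hσU)]
        exact congrArg (fun l => σ l (ρ i)) hmap
    have hBID := hwin ρ hρ h0 key
    obtain ⟨idx, hi0, hseg⟩ := hBID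
    exact ⟨idx, hi0, fun ℓ => hseg ℓ⟩
  · rintro s ⟨⟨s', hs'U⟩, ⟨σ', hσ', hwin'⟩, rfl⟩
    set σ0 : List S → S → S := fun h t =>
      if ht : (∀ x ∈ h, x ∈ Uᶜ) ∧ t ∈ Uᶜ then
        (σ' (h.pmap (fun a ha => ⟨a, ha⟩) ht.1) ⟨t, ht.2⟩).1
      else (G.total t).choose with hσ0def
    have hσ0 : G.IsStrategy σ0 := by
      intro h t
      rw [hσ0def]
      dsimp only
      split_ifs with ht
      · exact hσ' (h.pmap (fun a ha => ⟨a, ha⟩) ht.1) ⟨t, ht.2⟩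
      · exact (G.total t).choose_spec
    refine ⟨σ0, hσ0, ?_⟩
    intro ρ hρ h0 hcomp
    have hUc : ∀ i, ρ i ∉ U := by
      intro i
      induction i using Nat.strong_induction_on with
      | _ i ih =>
        match i with
        | 0 => rw [h0]; exact hs'U
        | Nat.succ n =>
          by_cases ho : G.owner (ρ n) = j
          · rw [hcomp n ho, hσ0def]
            dsimp only
            have hcnd : (∀ x ∈ (List.ofFn fun m : Fin n => ρ m), x ∈ Uᶜ) ∧ ρ n ∈ Uᶜ := by
              constructor
              · intro x hx
                rw [List.mem_ofFn] at hx
                obtain ⟨m, rfl⟩ := hx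
                exact ih m (Nat.lt_succ_of_lt m.isLt)
              · exact ih n (Nat.lt_succ_self n)
            rw [dif_pos hcnd]
            exact (σ' _ _).2
          · exact hclU (ρ n) (ih n (Nat.lt_succ_self n)) (hne _ ho) (ρ (n+1)) (hρ n)
    have hpl' : (G.restrict Uᶜ htot).IsPlay (fun i => (⟨ρ i, hUc i⟩ : ↥Uᶜ)) := fun i => hρ i
    have h0' : (fun i => (⟨ρ i, hUc i⟩ : ↥Uᶜ)) 0 = ⟨s', hs'U⟩ := Subtype.ext h0
    have hcomp' : (G.restrict Uᶜ htot).Compatible j σ' (fun i => (⟨ρ i, hUc i⟩ : ↥Uᶜ)) := by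
      intro i hoi
      apply Subtype.ext
      show ρ (i+1) = _
      have hoG : G.owner (ρ i) = j := hoi
      rw [hcomp i hoG, hσ0def]
      dsimp only
      have hcnd : (∀ x ∈ (List.ofFn fun m : Fin i => ρ m), x ∈ Uᶜ) ∧ ρ i ∈ Uᶜ := by
        constructor
        · intro x hx
          rw [List.mem_ofFn] at hx
          obtain ⟨m, rfl⟩ := hx
          exact hUc m
        · exact hUc i
      rw [dif_pos hcnd]
      congr 1
      rw [ParityGame.pmap_ofFn]
    have hB' := hwin' _ hpl' h0' hcomp'
    obtain ⟨idx, hi0, hseg⟩ := hB'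
    exact ⟨idx, hi0, fun ℓ => hseg ℓ⟩
end
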